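/- arXiv:2212.03347 — 4 statements merged into one kernel-verified Lean document; each statement's English description precedes it below -/
import Mathlib

section
/- Let G be an (s,k)-edge-connected graph with k ≥ 2 and deg(s) ≥ 4. Then no three distinct maximal independent sets of the lifting graph L(G,s,k) have a nonempty common intersection. -/
/-- A finite loopless multigraph. -/
structure Multigraph where
  V : Type
  E : Type
  [finV : Fintype V]
  [finE : Fintype E]
  [decV : DecidableEq V]
  [decE : DecidableEq E]
  ends : E → Sym2 V
  loopless : ∀ e, ¬ (ends e).IsDiag

attribute [instance] Multigraph.finV Multigraph.finE Multigraph.decV Multigraph.decE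

namespace Multigraph

variable (G : Multigraph)

/-- Walks in a multigraph, recorded as lists of edges. -/
inductive IsWalk (G : Multigraph) : G.V → G.V → List G.E → Prop
  | nil (v : G.V) : IsWalk G v v []
  | cons {u v w : G.V} {e : G.E} {p : List G.E} :
      G.ends e = s(u, v) → IsWalk G v w p → IsWalk G u w (e :: p)

/-- There exist `k` pairwise edge-disjoint paths from `u` to `v`. -/
def EdgeDisjointPaths (u v : G.V) (k : ℕ) : Prop :=
  ∃ P : Fin k → List G.E, (∀ i, G.IsWalk u v (P i)) ∧
    ∀ i j, i ≠ j → ∀ e, e ∈ P i → e ∉ P j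

/-- There exist `k` pairwise edge-disjoint paths from `u` to `v` using only
edges with both ends in `B`. -/
def EdgeDisjointPathsWithin (B : Set G.V) (u v : G.V) (k : ℕ) : Prop :=
  ∃ P : Fin k → List G.E,
    (∀ i, G.IsWalk u v (P i) ∧ ∀ e ∈ P i, ∀ w ∈ G.ends e, w ∈ B) ∧
    ∀ i j, i ≠ j → ∀ e, e ∈ P i → e ∉ P j

/-- `G` is `(s,k)`-edge-connected: it has at least three vertices and any two
vertices different from `s` are joined by `k` pairwise edge-disjoint paths. -/
def SKConnected (s : G.V) (k : ℕ) : Prop :=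
  3 ≤ Fintype.card G.V ∧
    ∀ u v : G.V, u ≠ s → v ≠ s → G.EdgeDisjointPaths u v k

/-- The edge cut `δ(A)`: edges with exactly one end in `A`. -/
def cutSet (A : Set G.V) : Set G.E :=
  {e | ∃ u v, G.ends e = s(u, v) ∧ u ∈ A ∧ v ∉ A}

/-- `δ(A:B)`: edges with one end in `A` and the other in `B`. -/
def between (A B : Set G.V) : Set G.E :=
  {e | ∃ u v, G.ends e = s(u, v) ∧ u ∈ A ∧ v ∈ B}

/-- The set of edges incident with `s`. -/
def incEdges (s : G.V) : Set G.E := {e | s ∈ G.ends e}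

/-- The degree of `s`: the number of edges incident with `s` (counted with
multiplicity). -/
noncomputable def deg (s : G.V) : ℕ := (G.incEdges s).ncard

/-- The set of neighbours of `s`. -/
def neighborSet (s : G.V) : Set G.V := {v | ∃ e, G.ends e = s(s, v)}

/-- `A ⊆ V(G)\{s}` is `k`-dangerous if it is nonempty, misses some non-`s`
vertex, and `|δ(A)| ≤ k+1`. -/
def Dangerous (s : G.V) (k : ℕ) (A : Set G.V) : Prop :=
  A.Nonempty ∧ s ∉ A ∧ (A ∪ {s})ᶜ.Nonempty ∧ (G.cutSet A).ncard ≤ k + 1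

/-- The other end of an edge incident with `s` (junk value `s` otherwise). -/
def otherEnd (s : G.V) (e : G.E) : G.V :=
  if h : s ∈ G.ends e then Sym2.Mem.other' h else s

/-- The lift of `G` at `s` obtained from the pair of edges `e, f`: both are
deleted and an edge joining their other ends is added (no edge is added if the
other ends coincide, i.e. `e` and `f` are parallel). -/
def lift (s : G.V) (e f : G.E) : Multigraph where
  V := G.V
  E := {x : G.E // x ≠ e ∧ x ≠ f} ⊕ PLift (G.otherEnd s e ≠ G.otherEnd s f)
  finV := inferInstance
  finE := by
    haveI : Fintype (PLift (G.otherEnd s e ≠ G.otherEnd s f)) := by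
      by_cases h : G.otherEnd s e ≠ G.otherEnd s f
      · exact Fintype.ofSubsingleton ⟨h⟩
      · haveI : IsEmpty (PLift (G.otherEnd s e ≠ G.otherEnd s f)) := ⟨fun x => h x.down⟩
        exact Fintype.ofIsEmpty
    infer_instance
  decV := inferInstance
  decE := by
    haveI : DecidableEq (PLift (G.otherEnd s e ≠ G.otherEnd s f)) :=
      fun a b => isTrue (Subsingleton.elim a b)
    infer_instance
  ends := fun x => match x with
    | Sum.inl y => G.ends y.1
    | Sum.inr _ => s(G.otherEnd s e, G.otherEnd s f)
  loopless := by
    rintro (y | h)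
    · exact G.loopless y.1
    · simpa using h.down

/-- The pair of edges `e, f` at `s` is `k`-liftable if the lift of `G` at
`e, f` is still `(s,k)`-edge-connected. -/
def IsLiftable (s : G.V) (k : ℕ) (e f : G.E) : Prop :=
  (G.lift s e f).SKConnected s k ∧ (G.lift s f e).SKConnected s k

/-- The `k`-lifting graph `L(G,s,k)`: vertices are the edges incident with
`s`, adjacent iff they form a `k`-liftable pair. -/
def liftingGraph (s : G.V) (k : ℕ) : SimpleGraph ↥(G.incEdges s) where
  Adj e f := e ≠ f ∧ G.IsLiftable s k e.1 f.1 ∧ G.IsLiftable s k f.1 e.1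
  symm := ⟨fun a b h => ⟨h.1.symm, h.2.2, h.2.1⟩⟩
  loopless := ⟨fun a h => h.1 rfl⟩

/-- A dangerous set corresponding to an independent set `I` of the lifting
graph: it contains the non-`s` ends of all edges of `I`. -/
def CorrDangerous (s : G.V) (k : ℕ) (I : Set ↥(G.incEdges s)) (A : Set G.V) : Prop :=
  G.Dangerous s k A ∧ ∀ e : ↥(G.incEdges s), e ∈ I → G.otherEnd s e.1 ∈ A

/-- A minimal dangerous set corresponding to `I`. -/
def MinCorrDangerous (s : G.V) (k : ℕ) (I : Set ↥(G.incEdges s)) (A : Set G.V) : Prop :=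
  G.CorrDangerous s k I A ∧ ∀ B, G.CorrDangerous s k I B → B ⊆ A → B = A

/-- Reachability in a multigraph. -/
def Reachable (u v : G.V) : Prop := ∃ p, G.IsWalk u v p

/-- Reachability avoiding a set `F` of edges. -/
def ReachableOutside (F : Set G.E) (u v : G.V) : Prop :=
  ∃ p, G.IsWalk u v p ∧ ∀ e ∈ p, e ∉ F

/-- Deleting the edge set `F` disconnects `G`. -/
def Disconnects (F : Set G.E) : Prop :=
  ∃ u v, G.Reachable u v ∧ ¬ G.ReachableOutside F u v

/-- A cut-edge: its deletion disconnects the graph. -/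
def IsCutEdge (e : G.E) : Prop := G.Disconnects {e}

/-- A minimal edge-cut: an inclusion-minimal set of edges whose deletion
disconnects the graph. -/
def IsMinimalCut (F : Set G.E) : Prop :=
  G.Disconnects F ∧ ∀ F' ⊂ F, ¬ G.Disconnects F'

/-- `G` has an `(s,r)`-path structure with blobs `B 0, …, B (n-1)`. -/
def PathStructure (s : G.V) (r : ℕ) {n : ℕ} (B : Fin n → Set G.V) : Prop :=
  3 ≤ n ∧
  (∀ i j, i ≠ j → Disjoint (B i) (B j)) ∧
  (⋃ i, B i) = {s}ᶜ ∧
  ∀ i : Fin n, ∀ h1 : 0 < i.1, ∀ h2 : i.1 < n - 1,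
    (G.cutSet (B i)).ncard = 2 * r + 1 ∧
    (G.between (B i) {s}).ncard = 1 ∧
    (G.between (B i) (B ⟨i.1 - 1, by omega⟩)).ncard = r ∧
    (G.between (B i) (B ⟨i.1 + 1, by omega⟩)).ncard = r

end Multigraph

section SimpleGraphDefs

variable {α : Type*}

/-- `I` is an independent set of a simple graph. -/
def IndepSet (H : SimpleGraph α) (I : Set α) : Prop :=
  ∀ a ∈ I, ∀ b ∈ I, ¬ H.Adj a b

/-- `I` is a maximal independent set. -/
def MaxIndepSet (H : SimpleGraph α) (I : Set α) : Prop :=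
  IndepSet H I ∧ ∀ J, IndepSet H J → I ⊆ J → J = I

/-- The independence graph of `H`: vertices are the maximal independent sets
of `H`, adjacent iff they intersect. -/
def independenceGraph (H : SimpleGraph α) :
    SimpleGraph {I : Set α // MaxIndepSet H I} where
  Adj I J := I ≠ J ∧ (I.1 ∩ J.1).Nonempty
  symm := ⟨fun I J h => ⟨h.1.symm, by rw [Set.inter_comm]; exact h.2⟩⟩
  loopless := ⟨fun I h => h.1 rfl⟩

/-- `H` is complete multipartite: non-adjacency is transitive. -/
def IsCompleteMultipartite (H : SimpleGraph α) : Prop :=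
  Transitive fun a b => ¬ H.Adj a b

/-- `H` is a star: there is a centre adjacent to exactly the other vertices,
which are pairwise non-adjacent. -/
def IsStarGraph (H : SimpleGraph α) : Prop :=
  ∃ c : α, ∀ a b, H.Adj a b ↔ (a ≠ b ∧ (a = c ∨ b = c))

end SimpleGraphDefs


/-! ### Auxiliary infrastructure -/

namespace Multigraph

section SWalkTheory

variable {H : Multigraph}

/-- Abstract walks over a step relation `St x e y`: from `x`, traverse edge `e`
arriving at `y`. -/
inductive SWalk (H : Multigraph) (St : H.V → H.E → H.V → Prop) :
    H.V → H.V → List H.E → Prop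
  | nil (x : H.V) : SWalk H St x x []
  | cons {x y z : H.V} {e : H.E} {l : List H.E} :
      St x e y → SWalk H St y z l → SWalk H St x z (e :: l)

/-- Any two traversals of the same edge have the same (unordered) endpoints. -/
def StepCompat (H : Multigraph) (St : H.V → H.E → H.V → Prop) : Prop :=
  ∀ ⦃x y x' y' : H.V⦄ ⦃e : H.E⦄, St x e y → St x' e y' →
    (x' = x ∧ y' = y) ∨ (x' = y ∧ y' = x)

variable {St : H.V → H.E → H.V → Prop}

lemma SWalk.append {x y z : H.V} {l₁ l₂ : List H.E}
    (h₁ : SWalk H St x y l₁) (h₂ : SWalk H St y z l₂) :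
    SWalk H St x z (l₁ ++ l₂) := by
  induction h₁ with
  | nil => simpa
  | cons st _ ih => exact .cons st (ih h₂)

lemma SWalk.split {x z : H.V} {l₁ l₂ : List H.E}
    (h : SWalk H St x z (l₁ ++ l₂)) :
    ∃ y, SWalk H St x y l₁ ∧ SWalk H St y z l₂ := by
  induction l₁ generalizing x with
  | nil => exact ⟨x, .nil x, h⟩
  | cons e l ih =>
    cases h with
    | cons st h' =>
      obtain ⟨y, hy, hy2⟩ := ih h'
      exact ⟨y, .cons st hy, hy2⟩

/-- A walk from inside `A` to outside `A` makes a step out of `A`. -/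
lemma SWalk.exists_cross {A : Set H.V} {x z : H.V} {l : List H.E}
    (h : SWalk H St x z l) (hx : x ∈ A) (hz : z ∉ A) :
    ∃ e ∈ l, ∃ a b, St a e b ∧ a ∈ A ∧ b ∉ A := by
  induction h with
  | nil => exact absurd hx hz
  | @cons x y z e l st h ih =>
    by_cases hy : y ∈ A
    · obtain ⟨e', he', rest⟩ := ih hy hz
      exact ⟨e', List.mem_cons_of_mem _ he', rest⟩
    · exact ⟨e, List.mem_cons_self, x, y, st, hx, hy⟩

/-- Walks can be shortcut to walks without repeated edges. -/
lemma SWalk.exists_nodup (hst : StepCompat H St) {x z : H.V} {l : List H.E}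
    (h : SWalk H St x z l) :
    ∃ l', l'.Nodup ∧ l' ⊆ l ∧ SWalk H St x z l' := by
  induction l generalizing x with
  | nil => exact ⟨[], by simp, by simp, h⟩
  | cons e l ih =>
    cases h with
    | @cons _ y _ _ _ st h' =>
      obtain ⟨l₂, hnd, hsub, hw⟩ := ih h'
      by_cases he : e ∈ l₂
      · obtain ⟨a, b, rfl⟩ := List.append_of_mem he
        obtain ⟨w, hwa, hwb⟩ := hw.split
        cases hwb with
        | @cons _ w' _ _ _ st' hb =>
          rcases hst st st' with ⟨rfl, rfl⟩ | ⟨rfl, rfl⟩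
          · refine ⟨e :: b, ?_, ?_, .cons st hb⟩
            · have : (a ++ e :: b).Nodup := hnd
              simp only [List.nodup_append, List.nodup_cons] at this
              exact List.nodup_cons.2 ⟨this.2.1.1, this.2.1.2⟩
            · intro x hx
              rcases List.mem_cons.1 hx with rfl | hx
              · exact List.mem_cons_self
              · exact List.mem_cons_of_mem _ (hsub (by simp [hx]))
          · refine ⟨b, ?_, ?_, hb⟩
            · have : (a ++ e :: b).Nodup := hnd
              simp only [List.nodup_append, List.nodup_cons] at this
              exact this.2.1.2
            · intro x hx
              exact List.mem_cons_of_mem _ (hsub (by simp [hx]))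
      · exact ⟨e :: l₂, List.nodup_cons.2 ⟨he, hnd⟩,
          List.cons_subset_cons _ hsub, .cons st hw⟩

/-- Plain graph walks are `SWalk`s for the step relation given by `ends`. -/
def walkStep (H : Multigraph) : H.V → H.E → H.V → Prop :=
  fun x e y => H.ends e = s(x, y)

lemma walkStep_compat : StepCompat H H.walkStep := by
  intro x y x' y' e h h'
  rw [walkStep] at h h'
  rw [h, Sym2.eq_iff] at h'
  tauto

lemma isWalk_iff_swalk {x z : H.V} {l : List H.E} :
    H.IsWalk x z l ↔ SWalk H H.walkStep x z l := by
  constructor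
  · intro h
    induction h with
    | nil => exact .nil _
    | cons he _ ih => exact .cons he ih
  · intro h
    induction h with
    | nil => exact .nil _
    | cons st _ ih => exact IsWalk.cons st ih

end SWalkTheory

section EasyMenger

variable {H : Multigraph}

lemma mem_cutSet_iff {A : Set H.V} {e : H.E} :
    e ∈ H.cutSet A ↔ ∃ a b, H.ends e = s(a, b) ∧ a ∈ A ∧ b ∉ A := Iff.rfl

/-- Easy direction of Menger: `k` edge-disjoint paths force every cut
separating their ends to have at least `k` edges. -/
lemma le_ncard_cutSet {u v : H.V} {k : ℕ} (h : H.EdgeDisjointPaths u v k)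
    {A : Set H.V} (hu : u ∈ A) (hv : v ∉ A) :
    k ≤ (H.cutSet A).ncard := by
  obtain ⟨P, hP, hdisj⟩ := h
  have cross : ∀ i : Fin k, ∃ e ∈ P i, e ∈ H.cutSet A := by
    intro i
    obtain ⟨e, he, a, b, st, ha, hb⟩ :=
      SWalk.exists_cross (isWalk_iff_swalk.1 (hP i)) hu hv
    exact ⟨e, he, a, b, st, ha, hb⟩
  choose c hcP hcC using cross
  have hinj : Function.Injective fun i => (⟨c i, hcC i⟩ : H.cutSet A) := by
    intro i j hij
    have hcc : c i = c j := congrArg Subtype.val hij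
    by_contra hne
    exact hdisj i j hne (c i) (hcP i) (hcc ▸ hcP j)
  calc k = Nat.card (Fin k) := by simp
    _ ≤ Nat.card (H.cutSet A) := Nat.card_le_card_of_injective _ hinj
    _ = (H.cutSet A).ncard := Nat.card_coe_set_eq _

end EasyMenger

section Flow

open Finset
open scoped Classical

variable {H : Multigraph}

/-- The edges carrying flow from `X` to `Y`. -/
noncomputable def fset (f : H.E → Option (H.V × H.V)) (X Y : Finset H.V) : Finset H.E :=
  univ.filter (fun e => ∃ a b, f e = some (a, b) ∧ a ∈ X ∧ b ∈ Y)

noncomputable def piCount (f : H.E → Option (H.V × H.V)) (X Y : Finset H.V) : ℕ :=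
  (fset f X Y).card

lemma fset_union_left (f : H.E → Option (H.V × H.V)) {X₁ X₂ : Finset H.V} (Y : Finset H.V)
    (h : Disjoint X₁ X₂) :
    piCount f (X₁ ∪ X₂) Y = piCount f X₁ Y + piCount f X₂ Y := by
  rw [piCount, piCount, piCount]
  rw [show fset f (X₁ ∪ X₂) Y = fset f X₁ Y ∪ fset f X₂ Y by
    ext e
    simp only [fset, mem_filter, mem_union, Finset.mem_union]
    constructor
    · rintro ⟨-, a, b, he, ha | ha, hb⟩
      · exact Or.inl ⟨mem_univ e, a, b, he, ha, hb⟩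
      · exact Or.inr ⟨mem_univ e, a, b, he, ha, hb⟩
    · rintro (⟨-, a, b, he, ha, hb⟩ | ⟨-, a, b, he, ha, hb⟩)
      · exact ⟨mem_univ e, a, b, he, Or.inl ha, hb⟩
      · exact ⟨mem_univ e, a, b, he, Or.inr ha, hb⟩]
  apply card_union_of_disjoint
  rw [Finset.disjoint_left]
  intro e h1 h2
  simp only [fset, mem_filter] at h1 h2
  obtain ⟨-, a, b, he, ha, hb⟩ := h1
  obtain ⟨-, a', b', he', ha', hb'⟩ := h2
  rw [he] at he'
  obtain ⟨rfl, rfl⟩ : a' = a ∧ b' = b := by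
    have := Option.some.inj he'
    exact ⟨(congrArg Prod.fst this).symm, (congrArg Prod.snd this).symm⟩
  exact (Finset.disjoint_left.1 h) ha ha'

lemma fset_union_right (f : H.E → Option (H.V × H.V)) (X : Finset H.V) {Y₁ Y₂ : Finset H.V}
    (h : Disjoint Y₁ Y₂) :
    piCount f X (Y₁ ∪ Y₂) = piCount f X Y₁ + piCount f X Y₂ := by
  rw [piCount, piCount, piCount]
  rw [show fset f X (Y₁ ∪ Y₂) = fset f X Y₁ ∪ fset f X Y₂ by
    ext e
    simp only [fset, mem_filter, mem_union, Finset.mem_union]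
    constructor
    · rintro ⟨-, a, b, he, ha, hb | hb⟩
      · exact Or.inl ⟨mem_univ e, a, b, he, ha, hb⟩
      · exact Or.inr ⟨mem_univ e, a, b, he, ha, hb⟩
    · rintro (⟨-, a, b, he, ha, hb⟩ | ⟨-, a, b, he, ha, hb⟩)
      · exact ⟨mem_univ e, a, b, he, ha, Or.inl hb⟩
      · exact ⟨mem_univ e, a, b, he, ha, Or.inr hb⟩]
  apply card_union_of_disjoint
  rw [Finset.disjoint_left]
  intro e h1 h2
  simp only [fset, mem_filter] at h1 h2
  obtain ⟨-, a, b, he, ha, hb⟩ := h1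
  obtain ⟨-, a', b', he', ha', hb'⟩ := h2
  rw [he] at he'
  obtain ⟨rfl, rfl⟩ : a' = a ∧ b' = b := by
    have := Option.some.inj he'
    exact ⟨(congrArg Prod.fst this).symm, (congrArg Prod.snd this).symm⟩
  exact (Finset.disjoint_left.1 h) hb hb'

/-- The imbalance (out-flow minus in-flow) of `f` at `w`. -/
noncomputable def phi (f : H.E → Option (H.V × H.V)) (w : H.V) : ℤ :=
  (piCount f {w} univ : ℤ) - piCount f univ {w}

lemma sum_pi_left (f : H.E → Option (H.V × H.V)) (A : Finset H.V) (Y : Finset H.V) :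
    ∑ w ∈ A, piCount f {w} Y = piCount f A Y := by
  induction A using Finset.induction with
  | empty =>
    simp only [Finset.sum_empty]
    rw [piCount, eq_comm, Finset.card_eq_zero, fset, Finset.filter_eq_empty_iff]
    rintro e - ⟨a, b, -, ha, -⟩
    exact absurd ha (Finset.notMem_empty a)
  | @insert x A hx ih =>
    rw [Finset.sum_insert hx, ih, show insert x A = {x} ∪ A by rw [Finset.insert_eq],
      fset_union_left f Y (by simpa using hx)]

lemma sum_pi_right (f : H.E → Option (H.V × H.V)) (X : Finset H.V) (A : Finset H.V) :
    ∑ w ∈ A, piCount f X {w} = piCount f X A := by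
  induction A using Finset.induction with
  | empty =>
    simp only [Finset.sum_empty]
    rw [piCount, eq_comm, Finset.card_eq_zero, fset, Finset.filter_eq_empty_iff]
    rintro e - ⟨a, b, -, -, hb⟩
    exact absurd hb (Finset.notMem_empty b)
  | @insert x A hx ih =>
    rw [Finset.sum_insert hx, ih, show insert x A = {x} ∪ A by rw [Finset.insert_eq],
      fset_union_right f X (by simpa using hx)]

/-- Net flow across a set equals the sum of imbalances inside it. -/
lemma sum_phi (f : H.E → Option (H.V × H.V)) (A : Finset H.V) :
    ∑ w ∈ A, phi f w = (piCount f A Aᶜ : ℤ) - piCount f Aᶜ A := by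
  have hdis : Disjoint A Aᶜ := disjoint_compl_right
  have hu : A ∪ Aᶜ = univ := by simp [Finset.union_compl]
  have h1 : piCount f A univ = piCount f A Aᶜ + piCount f A A := by
    rw [← hu, fset_union_right f A hdis]; ring
  have h2 : piCount f univ A = piCount f Aᶜ A + piCount f A A := by
    rw [← hu, fset_union_left f A hdis]; ring
  have : ∑ w ∈ A, phi f w =
      (piCount f A univ : ℤ) - piCount f univ A := by
    simp only [phi]
    rw [Finset.sum_sub_distrib]
    norm_cast
    rw [sum_pi_left, sum_pi_right]
  rw [this, h1, h2]
  push_cast; ring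

/-- A flow of value `m` from `u` to `v`. -/
structure IsFlow (H : Multigraph) (u v : H.V) (m : ℕ) (f : H.E → Option (H.V × H.V)) :
    Prop where
  valid : ∀ e a b, f e = some (a, b) → H.ends e = s(a, b)
  conserve : ∀ w, w ≠ u → w ≠ v → phi f w = 0
  value : phi f u = m

/-- Residual steps: traverse an unused edge in either direction, or a used
edge backwards. -/
def resStep (H : Multigraph) (f : H.E → Option (H.V × H.V)) : H.V → H.E → H.V → Prop :=
  fun x e y => (f e = none ∧ H.ends e = s(x, y)) ∨ f e = some (y, x)

/-- Support steps: traverse a used edge forwards. -/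
def supStep (H : Multigraph) (f : H.E → Option (H.V × H.V)) : H.V → H.E → H.V → Prop :=
  fun x e y => f e = some (x, y)

lemma resStep_compat (f : H.E → Option (H.V × H.V)) : StepCompat H (H.resStep f) := by
  rintro x y x' y' e (⟨h1, h2⟩ | h1) (⟨h1', h2'⟩ | h1')
  · rw [h2, Sym2.eq_iff] at h2'; tauto
  · rw [h1] at h1'; exact absurd h1' (by simp)
  · rw [h1'] at h1; exact absurd h1 (by simp)
  · rw [h1] at h1'
    have := Option.some.inj h1'
    exact Or.inl ⟨congrArg Prod.snd this.symm, congrArg Prod.fst this.symm⟩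

lemma supStep_compat (f : H.E → Option (H.V × H.V)) : StepCompat H (H.supStep f) := by
  rintro x y x' y' e h h'
  rw [supStep] at h h'
  rw [h] at h'
  have := Option.some.inj h'
  exact Or.inl ⟨congrArg Prod.fst this.symm, congrArg Prod.snd this.symm⟩

lemma SWalk.mem_step {St : H.V → H.E → H.V → Prop} {x z : H.V} {l : List H.E}
    (h : SWalk H St x z l) {e : H.E} (he : e ∈ l) : ∃ a b, St a e b := by
  induction h with
  | nil => exact absurd he (List.not_mem_nil)
  | cons st h ih =>
    rcases List.mem_cons.1 he with rfl | he'
    · exact ⟨_, _, st⟩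
    · exact ih he'

lemma SWalk.congr_edges {St St' : H.V → H.E → H.V → Prop} {x z : H.V} {l : List H.E}
    (hl : ∀ e ∈ l, ∀ a b, St a e b → St' a e b) (h : SWalk H St x z l) :
    SWalk H St' x z l := by
  induction h with
  | nil => exact .nil _
  | cons st h ih =>
    exact .cons (hl _ (List.mem_cons_self) _ _ st)
      (ih (fun e he a b hab => hl e (List.mem_cons_of_mem _ he) a b hab))

/-- Out/in indicator of an oriented edge value at a vertex. -/
noncomputable def dOut (o : Option (H.V × H.V)) (w : H.V) : ℤ :=
  if ∃ a b, o = some (a, b) ∧ a = w then 1 else 0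

noncomputable def dIn (o : Option (H.V × H.V)) (w : H.V) : ℤ :=
  if ∃ a b, o = some (a, b) ∧ b = w then 1 else 0

lemma dOut_some (x y w : H.V) : dOut (H := H) (some (x, y)) w = if w = x then 1 else 0 := by
  rw [dOut]
  refine if_congr ?_ rfl rfl
  constructor
  · rintro ⟨a, b, hab, rfl⟩
    exact (congrArg Prod.fst (Option.some.inj hab)).symm
  · rintro rfl
    exact ⟨w, y, rfl, rfl⟩

lemma dIn_some (x y w : H.V) : dIn (H := H) (some (x, y)) w = if w = y then 1 else 0 := by
  rw [dIn]
  refine if_congr ?_ rfl rfl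
  constructor
  · rintro ⟨a, b, hab, rfl⟩
    exact (congrArg Prod.snd (Option.some.inj hab)).symm
  · rintro rfl
    exact ⟨x, w, rfl, rfl⟩

lemma dOut_none (w : H.V) : dOut (H := H) none w = 0 := by simp [dOut]

lemma dIn_none (w : H.V) : dIn (H := H) none w = 0 := by simp [dIn]

lemma card_filter_congr_update {p q : H.E → Prop} (e : H.E)
    (h : ∀ e', e' ≠ e → (p e' ↔ q e')) :
    ((univ.filter p).card : ℤ) =
      (univ.filter q).card + (if p e then 1 else 0) - (if q e then 1 else 0) := by
  have key : ∀ r : H.E → Prop, ((univ.filter r).card : ℤ)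
      = ((univ.erase e).filter r).card + (if r e then 1 else 0) := by
    intro r
    by_cases hre : r e
    · have he : e ∈ univ.filter r := Finset.mem_filter.2 ⟨mem_univ e, hre⟩
      have hpos : 0 < (univ.filter r).card := Finset.card_pos.2 ⟨e, he⟩
      rw [if_pos hre, Finset.filter_erase, Finset.card_erase_of_mem he,
        Nat.cast_pred hpos]
      ring
    · rw [if_neg hre, Finset.filter_erase,
        Finset.erase_eq_of_notMem (fun hc => hre (Finset.mem_filter.1 hc).2), add_zero]
  have hpq : (univ.erase e).filter p = (univ.erase e).filter q := by
    apply Finset.filter_congr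
    intro x hx
    exact h x (Finset.ne_of_mem_erase hx)
  rw [key p, key q, hpq]; ring

lemma phi_eq_sum (f : H.E → Option (H.V × H.V)) (w : H.V) :
    phi f w = ∑ e ∈ univ, (dOut (f e) w - dIn (f e) w) := by
  rw [phi, piCount, piCount, fset, fset, Finset.card_filter, Finset.card_filter]
  push_cast
  rw [← Finset.sum_sub_distrib]
  apply Finset.sum_congr rfl
  intro e _
  congr 1
  · rw [dOut]
    refine if_congr ?_ rfl rfl
    simp
  · rw [dIn]
    refine if_congr ?_ rfl rfl
    simp

lemma phi_update (f : H.E → Option (H.V × H.V)) (e : H.E) (o : Option (H.V × H.V))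
    (w : H.V) :
    phi (Function.update f e o) w =
      phi f w + (dOut o w - dOut (f e) w) - (dIn o w - dIn (f e) w) := by
  rw [phi_eq_sum, phi_eq_sum]
  rw [← Finset.sum_erase_add _ _ (mem_univ e), ← Finset.sum_erase_add _ _ (mem_univ e)]
  rw [Function.update_self]
  have hcongr : ∀ e' ∈ univ.erase e,
      dOut (Function.update f e o e') w - dIn (Function.update f e o e') w
        = dOut (f e') w - dIn (f e') w := by
    intro e' he'
    rw [Function.update_of_ne (Finset.ne_of_mem_erase he')]
  rw [Finset.sum_congr rfl hcongr]
  ring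

/-- Augmenting along a residual walk increases the imbalance at its start by 1
and decreases it at its end by 1. -/
lemma augment_along (v : H.V) :
    ∀ l : List H.E, l.Nodup → ∀ (f : H.E → Option (H.V × H.V)) (x : H.V),
      SWalk H (H.resStep f) x v l →
      (∀ e a b, f e = some (a, b) → H.ends e = s(a, b)) →
      ∃ f', (∀ e a b, f' e = some (a, b) → H.ends e = s(a, b)) ∧
        (∀ e, e ∉ l → f' e = f e) ∧
        (∀ w, phi f' w = phi f w + (if w = x then 1 else 0) - (if w = v then 1 else 0)) := by
  intro l
  induction l with
  | nil =>
    intro _ f x hw hv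
    cases hw
    exact ⟨f, hv, fun _ _ => rfl, fun w => by ring⟩
  | cons e l ih =>
    intro hnd f x hw hv
    obtain ⟨hel, hndl⟩ := List.nodup_cons.1 hnd
    cases hw with
    | @cons _ y _ _ _ st hw' =>
      have hupd : ∀ (o : Option (H.V × H.V)),
          SWalk H (H.resStep (Function.update f e o)) y v l := by
        intro o
        refine SWalk.congr_edges (fun e' he' a b hab => ?_) hw'
        have : Function.update f e o e' = f e' :=
          Function.update_of_ne (ne_of_mem_of_not_mem he' hel) _ _
        rw [resStep, this]
        exact hab
      rcases st with ⟨hnone, hends⟩ | hsome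
      · -- forward step along an unused edge
        set f₁ := Function.update f e (some (x, y)) with hf₁
        have hval₁ : ∀ e' a b, f₁ e' = some (a, b) → H.ends e' = s(a, b) := by
          intro e' a b h
          by_cases hee : e' = e
          · subst hee
            rw [hf₁, Function.update_self] at h
            injection h with h2
            injection h2 with h3 h4
            subst h3; subst h4
            exact hends
          · rw [hf₁, Function.update_of_ne hee] at h
            exact hv e' a b h
        obtain ⟨f', hval', hoff', hphi'⟩ := ih hndl f₁ y (hupd _) hval₁
        refine ⟨f', hval', ?_, ?_⟩
        · intro e' he'
          rw [hoff' e' (List.not_mem_of_not_mem_cons he'), hf₁,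
            Function.update_of_ne (List.ne_of_not_mem_cons he')]
        · intro w
          rw [hphi' w, hf₁, phi_update, hnone, dOut_some, dIn_some, dOut_none, dIn_none]
          ring
      · -- backward step along a used edge
        set f₁ := Function.update f e none with hf₁
        have hval₁ : ∀ e' a b, f₁ e' = some (a, b) → H.ends e' = s(a, b) := by
          intro e' a b h
          by_cases hee : e' = e
          · subst hee; rw [hf₁, Function.update_self] at h; exact absurd h (by simp)
          · rw [hf₁, Function.update_of_ne hee] at h
            exact hv e' a b h
        obtain ⟨f', hval', hoff', hphi'⟩ := ih hndl f₁ y (hupd _) hval₁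
        refine ⟨f', hval', ?_, ?_⟩
        · intro e' he'
          rw [hoff' e' (List.not_mem_of_not_mem_cons he'), hf₁,
            Function.update_of_ne (List.ne_of_not_mem_cons he')]
        · intro w
          rw [hphi' w, hf₁, phi_update, hsome, dOut_some, dIn_some, dOut_none, dIn_none]
          ring

/-- Removing a (forward) support walk decreases the imbalance at its start
by 1 and increases it at its end by 1, emptying exactly its edges. -/
lemma remove_along (v : H.V) :
    ∀ l : List H.E, l.Nodup → ∀ (f : H.E → Option (H.V × H.V)) (x : H.V),
      SWalk H (H.supStep f) x v l →
      (∀ e a b, f e = some (a, b) → H.ends e = s(a, b)) →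
      ∃ f', (∀ e a b, f' e = some (a, b) → H.ends e = s(a, b)) ∧
        (∀ e, e ∉ l → f' e = f e) ∧ (∀ e ∈ l, f' e = none) ∧
        (∀ w, phi f' w = phi f w - (if w = x then 1 else 0) + (if w = v then 1 else 0)) := by
  intro l
  induction l with
  | nil =>
    intro _ f x hw hv
    cases hw
    exact ⟨f, hv, fun _ _ => rfl, by simp, fun w => by ring⟩
  | cons e l ih =>
    intro hnd f x hw hv
    obtain ⟨hel, hndl⟩ := List.nodup_cons.1 hnd
    cases hw with
    | @cons _ y _ _ _ st hw' =>
      have hsome : f e = some (x, y) := st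
      set f₁ := Function.update f e none with hf₁
      have hval₁ : ∀ e' a b, f₁ e' = some (a, b) → H.ends e' = s(a, b) := by
        intro e' a b h
        by_cases hee : e' = e
        · subst hee; rw [hf₁, Function.update_self] at h; exact absurd h (by simp)
        · rw [hf₁, Function.update_of_ne hee] at h
          exact hv e' a b h
      have hw₁ : SWalk H (H.supStep f₁) y v l := by
        refine SWalk.congr_edges (fun e' he' a b hab => ?_) hw'
        have : f₁ e' = f e' := Function.update_of_ne (ne_of_mem_of_not_mem he' hel) _ _
        rw [supStep, this]
        exact hab
      obtain ⟨f', hval', hoff', hnone', hphi'⟩ := ih hndl f₁ y hw₁ hval₁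
      refine ⟨f', hval', ?_, ?_, ?_⟩
      · intro e' he'
        rw [hoff' e' (List.not_mem_of_not_mem_cons he'), hf₁,
          Function.update_of_ne (List.ne_of_not_mem_cons he')]
      · intro e' he'
        rcases List.mem_cons.1 he' with rfl | he''
        · rw [hoff' e' hel, hf₁, Function.update_self]
        · exact hnone' e' he''
      · intro w
        rw [hphi' w, hf₁, phi_update, hsome, dOut_some, dIn_some, dOut_none, dIn_none]
        ring

lemma phi_zero_flow (w : H.V) : phi (H := H) (fun _ => none) w = 0 := by
  have : ∀ X Y : Finset H.V, piCount (H := H) (fun _ => none) X Y = 0 := by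
    intro X Y
    rw [piCount, Finset.card_eq_zero, fset, Finset.filter_eq_empty_iff]
    rintro e - ⟨a, b, h, -⟩
    exact (by simp at h)
  rw [phi, this, this]; ring

/-- Existence of flows of any value up to the minimum cut. -/
lemma flow_exists {u v : H.V} (huv : u ≠ v) {k : ℕ}
    (hcut : ∀ A : Set H.V, u ∈ A → v ∉ A → k ≤ (H.cutSet A).ncard) :
    ∀ m, m ≤ k → ∃ f, IsFlow H u v m f := by
  intro m
  induction m with
  | zero =>
    intro _
    exact ⟨fun _ => none, fun e a b h => by simp at h,
      fun w _ _ => phi_zero_flow w, by rw [phi_zero_flow]; simp⟩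
  | succ m ih =>
    intro hmk
    obtain ⟨f, hf⟩ := ih (Nat.le_of_succ_le hmk)
    -- the residual reachability set
    set R : Set H.V := {x | ∃ l, SWalk H (H.resStep f) u x l} with hR
    have hu : u ∈ R := ⟨[], .nil u⟩
    have hstep : ∀ x, x ∈ R → ∀ e y, H.resStep f x e y → y ∈ R := by
      rintro x ⟨l, hl⟩ e y hst
      exact ⟨l ++ [e], hl.append (.cons hst (.nil y))⟩
    by_cases hv : v ∈ R
    · -- augment
      obtain ⟨l, hl⟩ := hv
      obtain ⟨l', hnd', _, hl'⟩ := hl.exists_nodup (resStep_compat f)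
      obtain ⟨f', hval', _, hphi'⟩ := augment_along v l' hnd' f u hl' hf.valid
      refine ⟨f', hval', ?_, ?_⟩
      · intro w hwu hwv
        rw [hphi' w, hf.conserve w hwu hwv, if_neg hwu, if_neg hwv]; ring
      · rw [hphi' u, hf.value, if_pos rfl, if_neg huv]; push_cast; ring
    · -- stuck: the reachable set is a small cut, contradiction
      exfalso
      have hkR := hcut R hu hv
      set RF : Finset H.V := (Set.toFinite R).toFinset with hRF
      have hmemRF : ∀ x, x ∈ RF ↔ x ∈ R := fun x => Set.Finite.mem_toFinset _
      have hsum : ∑ w ∈ RF, phi f w = (m : ℤ) := by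
        rw [Finset.sum_eq_single_of_mem u ((hmemRF u).2 hu)]
        · exact hf.value
        · intro w hw hwu
          exact hf.conserve w hwu (fun hc => hv (hc ▸ (hmemRF w).1 hw))
      have hin0 : piCount f RFᶜ RF = 0 := by
        rw [piCount, Finset.card_eq_zero, fset, Finset.filter_eq_empty_iff]
        rintro e - ⟨a, b, he, ha, hb⟩
        have : a ∈ R := hstep b ((hmemRF b).1 hb) e a (Or.inr he)
        exact (Finset.mem_compl.1 ha) ((hmemRF a).2 this)
      have hcutsub : (Set.toFinite (H.cutSet R)).toFinset ⊆ fset f RF RFᶜ := by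
        intro e he
        rw [Set.Finite.mem_toFinset] at he
        obtain ⟨a, b, hab, ha, hb⟩ := he
        rw [fset, Finset.mem_filter]
        refine ⟨mem_univ e, ?_⟩
        rcases Option.eq_none_or_eq_some (f e) with hfe | ⟨⟨p1, p2⟩, hfe⟩
        · exact absurd (hstep a ha e b (Or.inl ⟨hfe, hab⟩)) hb
        · have hends := hf.valid e p1 p2 hfe
          rw [hab, Sym2.eq_iff] at hends
          rcases hends with ⟨rfl, rfl⟩ | ⟨rfl, rfl⟩
          · exact ⟨a, b, hfe, (hmemRF a).2 ha, Finset.mem_compl.2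
              (fun hc => hb ((hmemRF b).1 hc))⟩
          · exact absurd (hstep a ha e b (Or.inr hfe)) hb
      have hle : (H.cutSet R).ncard ≤ piCount f RF RFᶜ := by
        rw [Set.ncard_eq_toFinset_card _ (Set.toFinite _)]
        exact Finset.card_le_card hcutsub
      have : (m : ℤ) = (piCount f RF RFᶜ : ℤ) - piCount f RFᶜ RF := by
        rw [← hsum, sum_phi]
      rw [hin0] at this
      have : (piCount f RF RFᶜ : ℤ) = m := by omega
      have hk : k ≤ m := le_trans hkR (by omega)
      omega

/-- Flow decomposition into edge-disjoint walks. -/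
lemma flow_decompose {u v : H.V} (huv : u ≠ v) :
    ∀ (m : ℕ) (f : H.E → Option (H.V × H.V)), IsFlow H u v m f →
      ∃ P : Fin m → List H.E, (∀ i, H.IsWalk u v (P i)) ∧
        (∀ i, ∀ e ∈ P i, f e ≠ none) ∧
        ∀ i j, i ≠ j → ∀ e, e ∈ P i → e ∉ P j := by
  intro m
  induction m with
  | zero =>
    intro f _
    exact ⟨fun i => i.elim0, fun i => i.elim0, fun i => i.elim0, fun i => i.elim0⟩
  | succ m ih =>
    intro f hf
    -- support reachability
    set R : Set H.V := {x | ∃ l, SWalk H (H.supStep f) u x l} with hR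
    have hu : u ∈ R := ⟨[], .nil u⟩
    have hstep : ∀ x, x ∈ R → ∀ e y, H.supStep f x e y → y ∈ R := by
      rintro x ⟨l, hl⟩ e y hst
      exact ⟨l ++ [e], hl.append (.cons hst (.nil y))⟩
    have hv : v ∈ R := by
      by_contra hv
      set RF : Finset H.V := (Set.toFinite R).toFinset with hRF
      have hmemRF : ∀ x, x ∈ RF ↔ x ∈ R := fun x => Set.Finite.mem_toFinset _
      have hsum : ∑ w ∈ RF, phi f w = ((m + 1 : ℕ) : ℤ) := by
        rw [Finset.sum_eq_single_of_mem u ((hmemRF u).2 hu)]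
        · exact hf.value
        · intro w hw hwu
          exact hf.conserve w hwu (fun hc => hv (hc ▸ (hmemRF w).1 hw))
      have hout0 : piCount f RF RFᶜ = 0 := by
        rw [piCount, Finset.card_eq_zero, fset, Finset.filter_eq_empty_iff]
        rintro e - ⟨a, b, he, ha, hb⟩
        have : b ∈ R := hstep a ((hmemRF a).1 ha) e b he
        exact (Finset.mem_compl.1 hb) ((hmemRF b).2 this)
      have := sum_phi f RF
      rw [hsum, hout0] at this
      omega
    obtain ⟨l, hl⟩ := hv
    obtain ⟨l', hnd', _, hl'⟩ := hl.exists_nodup (supStep_compat f)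
    obtain ⟨f', hval', hoff', hnone', hphi'⟩ := remove_along v l' hnd' f u hl' hf.valid
    have hf' : IsFlow H u v m f' := by
      refine ⟨hval', ?_, ?_⟩
      · intro w hwu hwv
        rw [hphi' w, hf.conserve w hwu hwv, if_neg hwu, if_neg hwv]; ring
      · rw [hphi' u, hf.value, if_pos rfl, if_neg huv]; push_cast; ring
    obtain ⟨P', hP'w, hP's, hP'd⟩ := ih f' hf'
    refine ⟨fun i => Fin.cases l' P' i, ?_, ?_, ?_⟩
    · intro i
      refine Fin.cases ?_ ?_ i
      · rw [isWalk_iff_swalk]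
        refine SWalk.congr_edges (fun e he a b hab => ?_) hl'
        exact hf.valid e a b hab
      · intro j
        simpa using hP'w j
    · intro i
      refine Fin.cases ?_ ?_ i
      · intro e he
        simp only [Fin.cases_zero] at he
        obtain ⟨a, b, hab⟩ := hl'.mem_step he
        rw [hab]; simp
      · intro j e he
        simp only [Fin.cases_succ] at he
        have h1 : f' e ≠ none := hP's j e he
        have h2 : e ∉ l' := fun hc => h1 (hnone' e hc)
        rw [← hoff' e h2]
        exact h1
    · intro i j hij e he
      rcases Fin.eq_zero_or_eq_succ i with rfl | ⟨i', rfl⟩ <;>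
        rcases Fin.eq_zero_or_eq_succ j with rfl | ⟨j', rfl⟩
      · exact absurd rfl hij
      · simp only [Fin.cases_zero] at he
        simp only [Fin.cases_succ]
        exact fun hc => (hP's j' e hc) (hnone' e he)
      · simp only [Fin.cases_succ] at he
        simp only [Fin.cases_zero]
        exact fun hc => (hP's i' e he) (hnone' e hc)
      · simp only [Fin.cases_succ] at he ⊢
        exact hP'd i' j' (fun hc => hij (by rw [hc])) e he

/-- Menger's theorem (hard direction) for multigraphs. -/
theorem menger {u v : H.V} {k : ℕ}
    (hcut : ∀ A : Set H.V, u ∈ A → v ∉ A → k ≤ (H.cutSet A).ncard) :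
    H.EdgeDisjointPaths u v k := by
  by_cases huv : u = v
  · subst huv
    exact ⟨fun _ => [], fun _ => IsWalk.nil u,
      fun i j _ e he => absurd he (List.not_mem_nil)⟩
  · obtain ⟨f, hf⟩ := flow_exists huv hcut k le_rfl
    obtain ⟨P, hPw, _, hPd⟩ := flow_decompose huv k f hf
    exact ⟨P, hPw, hPd⟩

end Flow

section CutLemmas

open Finset
open scoped Classical

variable {H : Multigraph}

lemma mem_cutSet_iff' {A : Set H.V} {e : H.E} {x y : H.V} (hxy : H.ends e = s(x, y)) :
    e ∈ H.cutSet A ↔ ((x ∈ A ∧ y ∉ A) ∨ (y ∈ A ∧ x ∉ A)) := by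
  constructor
  · rintro ⟨u, v, huv, hu, hv⟩
    rw [hxy, Sym2.eq_iff] at huv
    rcases huv with ⟨rfl, rfl⟩ | ⟨rfl, rfl⟩
    · exact Or.inl ⟨hu, hv⟩
    · exact Or.inr ⟨hu, hv⟩
  · rintro (⟨hx, hy⟩ | ⟨hy, hx⟩)
    · exact ⟨x, y, hxy, hx, hy⟩
    · exact ⟨y, x, by rw [hxy, Sym2.eq_swap], hy, hx⟩

lemma mem_between_iff' {A B : Set H.V} {e : H.E} {x y : H.V} (hxy : H.ends e = s(x, y)) :
    e ∈ H.between A B ↔ ((x ∈ A ∧ y ∈ B) ∨ (y ∈ A ∧ x ∈ B)) := by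
  constructor
  · rintro ⟨u, v, huv, hu, hv⟩
    rw [hxy, Sym2.eq_iff] at huv
    rcases huv with ⟨rfl, rfl⟩ | ⟨rfl, rfl⟩
    · exact Or.inl ⟨hu, hv⟩
    · exact Or.inr ⟨hu, hv⟩
  · rintro (⟨hx, hy⟩ | ⟨hy, hx⟩)
    · exact ⟨x, y, hxy, hx, hy⟩
    · exact ⟨y, x, by rw [hxy, Sym2.eq_swap], hy, hx⟩

lemma cutSet_compl (A : Set H.V) : H.cutSet Aᶜ = H.cutSet A := by
  ext e
  obtain ⟨⟨x, y⟩, hxy⟩ := Quot.exists_rep (H.ends e)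
  rw [mem_cutSet_iff' (A := Aᶜ) hxy.symm, mem_cutSet_iff' (A := A) hxy.symm]
  simp only [Set.mem_compl_iff, not_not]
  tauto

lemma between_mono {A B A' B' : Set H.V} (hA : A ⊆ A') (hB : B ⊆ B') :
    H.between A B ⊆ H.between A' B' := by
  rintro e ⟨u, v, huv, hu, hv⟩
  exact ⟨u, v, huv, hA hu, hB hv⟩

lemma between_comm (A B : Set H.V) : H.between A B = H.between B A := by
  ext e
  obtain ⟨⟨x, y⟩, hxy⟩ := Quot.exists_rep (H.ends e)
  rw [mem_between_iff' hxy.symm, mem_between_iff' hxy.symm]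
  tauto

lemma ncard_set_eq_sum (S : Set H.E) :
    S.ncard = ∑ e ∈ univ, if e ∈ S then 1 else 0 := by
  rw [Set.ncard_eq_toFinset_card _ (Set.toFinite S)]
  rw [show (Set.toFinite S).toFinset = univ.filter (· ∈ S) by
    ext e
    simp only [Set.Finite.mem_toFinset, Finset.mem_filter, Finset.mem_univ, true_and]]
  rw [Finset.card_filter]

/-- First submodular identity. -/
lemma submod_union_inter (A B : Set H.V) :
    (H.cutSet A).ncard + (H.cutSet B).ncard =
      (H.cutSet (A ∪ B)).ncard + (H.cutSet (A ∩ B)).ncard +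
        2 * (H.between (A \ B) (B \ A)).ncard := by
  rw [ncard_set_eq_sum, ncard_set_eq_sum, ncard_set_eq_sum, ncard_set_eq_sum,
    ncard_set_eq_sum]
  rw [← Finset.sum_add_distrib, ← Finset.sum_add_distrib, Finset.mul_sum,
    ← Finset.sum_add_distrib]
  apply Finset.sum_congr rfl
  intro e _
  obtain ⟨⟨x, y⟩, hxy⟩ := Quot.exists_rep (H.ends e)
  rw [if_congr (mem_cutSet_iff' (A := A) hxy.symm) rfl rfl,
    if_congr (mem_cutSet_iff' (A := B) hxy.symm) rfl rfl,
    if_congr (mem_cutSet_iff' (A := A ∪ B) hxy.symm) rfl rfl,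
    if_congr (mem_cutSet_iff' (A := A ∩ B) hxy.symm) rfl rfl,
    if_congr (mem_between_iff' (A := A \ B) (B := B \ A) hxy.symm) rfl rfl]
  simp only [Set.mem_union, Set.mem_inter_iff, Set.mem_diff]
  by_cases hxA : x ∈ A <;> by_cases hxB : x ∈ B <;>
    by_cases hyA : y ∈ A <;> by_cases hyB : y ∈ B <;>
    simp [hxA, hxB, hyA, hyB]

/-- Second submodular identity. -/
lemma submod_diff_diff (A B : Set H.V) :
    (H.cutSet A).ncard + (H.cutSet B).ncard =
      (H.cutSet (A \ B)).ncard + (H.cutSet (B \ A)).ncard +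
        2 * (H.between (A ∩ B) ((A ∪ B)ᶜ)).ncard := by
  rw [ncard_set_eq_sum, ncard_set_eq_sum, ncard_set_eq_sum, ncard_set_eq_sum,
    ncard_set_eq_sum]
  rw [← Finset.sum_add_distrib, ← Finset.sum_add_distrib, Finset.mul_sum,
    ← Finset.sum_add_distrib]
  apply Finset.sum_congr rfl
  intro e _
  obtain ⟨⟨x, y⟩, hxy⟩ := Quot.exists_rep (H.ends e)
  rw [if_congr (mem_cutSet_iff' (A := A) hxy.symm) rfl rfl,
    if_congr (mem_cutSet_iff' (A := B) hxy.symm) rfl rfl,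
    if_congr (mem_cutSet_iff' (A := A \ B) hxy.symm) rfl rfl,
    if_congr (mem_cutSet_iff' (A := B \ A) hxy.symm) rfl rfl,
    if_congr (mem_between_iff' (A := A ∩ B) (B := (A ∪ B)ᶜ) hxy.symm) rfl rfl]
  simp only [Set.mem_union, Set.mem_inter_iff, Set.mem_diff, Set.mem_compl_iff]
  by_cases hxA : x ∈ A <;> by_cases hxB : x ∈ B <;>
    by_cases hyA : y ∈ A <;> by_cases hyB : y ∈ B <;>
    simp [hxA, hxB, hyA, hyB]

end CutLemmas

section Mader

open scoped Classical

variable {G : Multigraph} {s : G.V}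

lemma ends_otherEnd {e : G.E} (he : s ∈ G.ends e) :
    G.ends e = s(s, G.otherEnd s e) := by
  rw [otherEnd, dif_pos he]
  exact (Sym2.other_spec' he).symm

lemma otherEnd_ne {e : G.E} (he : s ∈ G.ends e) : G.otherEnd s e ≠ s := by
  intro hc
  apply G.loopless e
  rw [ends_otherEnd he, hc]
  exact Sym2.mk_isDiag_iff.2 rfl

lemma s_edge_mem_cut {e : G.E} (he : s ∈ G.ends e) {B : Set G.V} (hs : s ∉ B) :
    e ∈ G.cutSet B ↔ G.otherEnd s e ∈ B := by
  rw [mem_cutSet_iff' (ends_otherEnd he)]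
  simp [hs]

lemma ncard_le_ncard_inj {α β : Type*} [Finite β] {S : Set α} {T : Set β}
    (F : S → T) (hF : Function.Injective F) : S.ncard ≤ T.ncard := by
  calc S.ncard = Nat.card S := (Nat.card_coe_set_eq S).symm
    _ ≤ Nat.card T := Nat.card_le_card_of_injective F hF
    _ = T.ncard := Nat.card_coe_set_eq T

lemma sep_le_cut {k : ℕ} (hcon : G.SKConnected s k)
    {X : Set G.V} (hne : X.Nonempty) (hs : s ∉ X) (hcompl : ((X ∪ {s})ᶜ).Nonempty) :
    k ≤ (G.cutSet X).ncard := by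
  obtain ⟨u, hu⟩ := hne
  obtain ⟨v, hv⟩ := hcompl
  simp only [Set.mem_compl_iff, Set.mem_union, Set.mem_singleton_iff, not_or] at hv
  exact le_ncard_cutSet (hcon.2 u v (fun h => hs (h ▸ hu)) hv.2) hu hv.1

/-- Decomposition of the cut of the lifted graph. -/
lemma lift_cutSet_decomp (e f : G.E) (B : Set G.V) :
    ((G.lift s e f).cutSet B).ncard
      = (G.cutSet B \ {e, f}).ncard
        + (if (G.otherEnd s e ≠ G.otherEnd s f) ∧
            ((G.otherEnd s e ∈ B ∧ G.otherEnd s f ∉ B) ∨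
              (G.otherEnd s f ∈ B ∧ G.otherEnd s e ∉ B)) then 1 else 0) := by
  set cross : Prop := (G.otherEnd s e ∈ B ∧ G.otherEnd s f ∉ B) ∨
      (G.otherEnd s f ∈ B ∧ G.otherEnd s e ∉ B) with hcrossdef
  have hdec : (G.lift s e f).cutSet B =
      (Sum.inl '' {y : {x : G.E // x ≠ e ∧ x ≠ f} | y.1 ∈ G.cutSet B}) ∪
      (Sum.inr '' {h : PLift (G.otherEnd s e ≠ G.otherEnd s f) | cross}) := by
    ext x
    cases x with
    | inl y =>
      unfold Multigraph.lift
      simp only [Set.mem_union, Set.mem_image, Set.mem_setOf_eq]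
      constructor
      · intro hx
        exact Or.inl ⟨y, hx, rfl⟩
      · rintro (⟨y', hy', heq⟩ | ⟨h', _, heq⟩)
        · cases Sum.inl.inj heq; exact hy'
        · exact absurd heq (by simp)
    | inr h =>
      have hends : (G.lift s e f).ends (Sum.inr h) =
          s(G.otherEnd s e, G.otherEnd s f) := rfl
      erw [mem_cutSet_iff' hends]
      unfold Multigraph.lift
      simp only [Set.mem_union, Set.mem_image, Set.mem_setOf_eq]
      constructor
      · intro hx
        exact Or.inr ⟨h, hx, rfl⟩
      · rintro (⟨y', _, heq⟩ | ⟨h', hh', heq⟩)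
        · exact absurd heq (by simp)
        · cases Sum.inr.inj heq; exact hh'
  rw [hdec]
  show (((Sum.inl '' {y : {x : G.E // x ≠ e ∧ x ≠ f} | y.1 ∈ G.cutSet B}) ∪
      (Sum.inr '' {h : PLift (G.otherEnd s e ≠ G.otherEnd s f) | cross}) : Set ({x : G.E // x ≠ e ∧ x ≠ f} ⊕ PLift (G.otherEnd s e ≠ G.otherEnd s f)))).ncard = _
  rw [Set.ncard_union_eq ?_ (Set.toFinite _) (Set.toFinite _)]
  · rw [Set.ncard_image_of_injective _ Sum.inl_injective,
      Set.ncard_image_of_injective _ Sum.inr_injective]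
    congr 1
    · rw [← Set.ncard_image_of_injective _ (Subtype.val_injective
        (p := fun x => x ≠ e ∧ x ≠ f))]
      congr 1
      ext x
      simp only [Set.mem_image, Set.mem_setOf_eq, Set.mem_diff, Set.mem_insert_iff,
        Set.mem_singleton_iff, Subtype.exists, exists_and_right, exists_eq_right, not_or]
      tauto
    · by_cases hc : G.otherEnd s e ≠ G.otherEnd s f
      · by_cases hcross : cross
        · rw [if_pos ⟨hc, hcross⟩]
          have : {h : PLift (G.otherEnd s e ≠ G.otherEnd s f) | cross} = Set.univ := by
            ext h; simp [hcross]
          rw [this, Set.ncard_univ]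
          letI : Unique (PLift (G.otherEnd s e ≠ G.otherEnd s f)) :=
            ⟨⟨PLift.up hc⟩, fun a => by cases a; rfl⟩
          exact Nat.card_unique
        · rw [if_neg (fun hcon' => hcross hcon'.2)]
          have : {h : PLift (G.otherEnd s e ≠ G.otherEnd s f) | cross} = ∅ := by
            ext h; simp [hcross]
          rw [this, Set.ncard_empty]
      · rw [if_neg (fun hcon' => hc hcon'.1)]
        have : {h : PLift (G.otherEnd s e ≠ G.otherEnd s f) | cross} = ∅ := by
          ext h; exact iff_of_false (fun _ => hc h.down) (fun h' => h')
        rw [this, Set.ncard_empty]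
  · rw [Set.disjoint_left]
    rintro x ⟨y, -, rfl⟩ ⟨h, -, hc⟩
    exact absurd hc (by simp)

lemma cut_diff_pair_ncard {e f : G.E} (hef : e ≠ f) (S : Set G.E) :
    (S \ {e, f}).ncard + ((if e ∈ S then 1 else 0) + (if f ∈ S then 1 else 0))
      = S.ncard := by
  have hmem : ∀ x, x ∈ ({e, f} : Set G.E) ↔ x = e ∨ x = f := fun x => by simp
  have hsplit : S = (S \ {e, f}) ∪ (S ∩ {e, f}) := by
    ext x; simp only [Set.mem_union, Set.mem_diff, Set.mem_inter_iff, hmem]; tauto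
  have hdisj : Disjoint (S \ {e, f}) (S ∩ {e, f}) := by
    rw [Set.disjoint_left]; rintro x ⟨-, hx⟩ ⟨-, hx'⟩; exact hx hx'
  have hcard : (S ∩ {e, f}).ncard =
      (if e ∈ S then 1 else 0) + (if f ∈ S then 1 else 0) := by
    by_cases he : e ∈ S <;> by_cases hf : f ∈ S
    · rw [if_pos he, if_pos hf, show S ∩ {e, f} = {e, f} from
        Set.inter_eq_right.mpr (by
          intro x hx
          rcases (hmem x).1 hx with rfl | rfl
          exacts [he, hf])]
      exact Set.ncard_pair hef
    · rw [if_pos he, if_neg hf, show S ∩ {e, f} = {e} by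
        ext x
        simp only [Set.mem_inter_iff, hmem, Set.mem_singleton_iff]
        constructor
        · rintro ⟨hxS, rfl | rfl⟩
          · rfl
          · exact absurd hxS hf
        · rintro rfl; exact ⟨he, Or.inl rfl⟩]
      simp
    · rw [if_neg he, if_pos hf, show S ∩ {e, f} = {f} by
        ext x
        simp only [Set.mem_inter_iff, hmem, Set.mem_singleton_iff]
        constructor
        · rintro ⟨hxS, rfl | rfl⟩
          · exact absurd hxS he
          · rfl
        · rintro rfl; exact ⟨hf, Or.inr rfl⟩]
      simp
    · rw [if_neg he, if_neg hf, show S ∩ {e, f} = ∅ by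
        ext x
        simp only [Set.mem_inter_iff, hmem, Set.mem_empty_iff_false, iff_false, not_and]
        rintro hxS (rfl | rfl)
        · exact he hxS
        · exact hf hxS]
      simp
  have hun := Set.ncard_union_eq hdisj (Set.toFinite _) (Set.toFinite _)
  rw [← hsplit, hcard] at hun
  omega

/-- The master counting identity comparing cuts in `G` and in a lift. -/
lemma lift_cut_master {e f : G.E} (he : s ∈ G.ends e) (hf : s ∈ G.ends f)
    (hef : e ≠ f) {B : Set G.V} (hs : s ∉ B) :
    ((G.lift s e f).cutSet B).ncard
        + ((if G.otherEnd s e ∈ B then 1 else 0) + (if G.otherEnd s f ∈ B then 1 else 0))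
      = (G.cutSet B).ncard
        + (if (G.otherEnd s e ≠ G.otherEnd s f) ∧
            ((G.otherEnd s e ∈ B ∧ G.otherEnd s f ∉ B) ∨
              (G.otherEnd s f ∈ B ∧ G.otherEnd s e ∉ B)) then 1 else 0) := by
  rw [lift_cutSet_decomp e f B]
  rw [← cut_diff_pair_ncard hef (G.cutSet B)]
  rw [if_congr (s_edge_mem_cut he hs) rfl rfl, if_congr (s_edge_mem_cut hf hs) rfl rfl]
  ring

/-- Easy direction of Mader: a dangerous set containing both other ends
obstructs lifting. -/
lemma dangerous_not_SK {k : ℕ} {e f : G.E} (he : s ∈ G.ends e) (hf : s ∈ G.ends f)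
    (hef : e ≠ f) (hk : 1 ≤ k) {A : Set G.V} (hA : G.Dangerous s k A)
    (hve : G.otherEnd s e ∈ A) (hvf : G.otherEnd s f ∈ A) :
    ¬ (G.lift s e f).SKConnected s k := by
  rintro ⟨-, hpaths⟩
  obtain ⟨⟨u, hu⟩, hAs, ⟨v, hv⟩, hAcard⟩ := hA
  simp only [Set.mem_compl_iff, Set.mem_union, Set.mem_singleton_iff, not_or] at hv
  have hk' := le_ncard_cutSet
    (hpaths u v (fun h => hAs (h ▸ hu)) hv.2) (A := A) hu hv.1
  have hmaster := lift_cut_master he hf hef hAs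
  rw [if_pos hve, if_pos hvf, if_neg (by tauto)] at hmaster
  omega

/-- Hard direction of Mader: a non-liftable pair yields a dangerous set
containing both other ends. -/
lemma not_SK_dangerous {k : ℕ} (hcon : G.SKConnected s k) {e f : G.E}
    (he : s ∈ G.ends e) (hf : s ∈ G.ends f) (hef : e ≠ f)
    (hnot : ¬ (G.lift s e f).SKConnected s k) :
    ∃ A, G.Dangerous s k A ∧ G.otherEnd s e ∈ A ∧ G.otherEnd s f ∈ A := by
  have hcard3 : 3 ≤ Fintype.card (G.lift s e f).V := hcon.1
  have hex : ∃ u v : G.V, u ≠ s ∧ v ≠ s ∧ ¬ (G.lift s e f).EdgeDisjointPaths u v k := by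
    by_contra hno
    push_neg at hno
    exact hnot ⟨hcard3, fun u v hu hv => hno u v hu hv⟩
  obtain ⟨u, v, hu, hv, hnopaths⟩ := hex
  have hmenger := mt (menger (H := G.lift s e f) (u := u) (v := v) (k := k)) hnopaths
  push_neg at hmenger
  obtain ⟨B₀, huB, hvB, hcutB⟩ := hmenger
  -- normalise so that `s ∉ B`
  obtain ⟨B, hsB, hw₁, hw₂, hcut⟩ :
      ∃ B : Set G.V, s ∉ B ∧ (∃ w, w ∈ B ∧ w ≠ s) ∧ (∃ w, w ∉ B ∧ w ≠ s) ∧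
        ((G.lift s e f).cutSet B).ncard < k := by
    by_cases hsB₀ : s ∈ B₀
    · exact ⟨B₀ᶜ, fun h => h hsB₀, ⟨v, hvB, hv⟩, ⟨u, fun h => h huB, hu⟩,
        (congrArg Set.ncard (cutSet_compl (H := G.lift s e f) B₀)).trans_lt hcutB⟩
    · exact ⟨B₀, hsB₀, ⟨u, huB, hu⟩, ⟨v, hvB, hv⟩, hcutB⟩
  obtain ⟨w₁, hw₁B, hw₁s⟩ := hw₁
  obtain ⟨w₂, hw₂B, hw₂s⟩ := hw₂
  have hsep : k ≤ (G.cutSet B).ncard := by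
    refine sep_le_cut hcon ⟨w₁, hw₁B⟩ hsB ⟨w₂, ?_⟩
    simp only [Set.mem_compl_iff, Set.mem_union, Set.mem_singleton_iff, not_or]
    exact ⟨hw₂B, hw₂s⟩
  have hmaster := lift_cut_master he hf hef hsB
  by_cases hve : G.otherEnd s e ∈ B <;> by_cases hvf : G.otherEnd s f ∈ B
  · refine ⟨B, ⟨⟨w₁, hw₁B⟩, hsB, ⟨w₂, ?_⟩, ?_⟩, hve, hvf⟩
    · simp only [Set.mem_compl_iff, Set.mem_union, Set.mem_singleton_iff, not_or]
      exact ⟨hw₂B, hw₂s⟩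
    · rw [if_pos hve, if_pos hvf, if_neg (by tauto)] at hmaster
      omega
  · exfalso
    by_cases hvev : G.otherEnd s e = G.otherEnd s f
    · rw [hvev] at hve; exact hvf hve
    · rw [if_pos hve, if_neg hvf, if_pos ⟨hvev, Or.inl ⟨hve, hvf⟩⟩] at hmaster
      omega
  · exfalso
    by_cases hvev : G.otherEnd s e = G.otherEnd s f
    · rw [hvev] at hve; exact hve hvf
    · rw [if_neg hve, if_pos hvf, if_pos ⟨hvev, Or.inr ⟨hvf, hve⟩⟩] at hmaster
      omega
  · exfalso
    rw [if_neg hve, if_neg hvf, if_neg (by tauto)] at hmaster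
    omega

end Mader

section DangerousCalculus

open scoped Classical

variable {G : Multigraph} {s : G.V} {k : ℕ}

lemma mem_sep_compl {X : Set G.V} {w : G.V} (hw : w ∉ X) (hws : w ≠ s) :
    w ∈ (X ∪ {s})ᶜ := by
  simp only [Set.mem_compl_iff, Set.mem_union, Set.mem_singleton_iff, not_or]
  exact ⟨hw, hws⟩

lemma of_mem_sep_compl {X : Set G.V} {w : G.V} (hw : w ∈ (X ∪ {s})ᶜ) :
    w ∉ X ∧ w ≠ s := by
  simpa only [Set.mem_compl_iff, Set.mem_union, Set.mem_singleton_iff, not_or] using hw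

lemma s_edge_mem_between {g : G.E} (hg : s ∈ G.ends g) {X Y : Set G.V}
    (hgX : G.otherEnd s g ∈ X) (hsY : s ∈ Y) : g ∈ G.between X Y := by
  rw [mem_between_iff' (ends_otherEnd hg)]
  exact Or.inr ⟨hgX, hsY⟩

/-- Frank's uncrossing: two dangerous sets whose intersection sends an edge to
`s` (or anywhere outside the union) are very constrained. -/
lemma U2 (hcon : G.SKConnected s k) {A B : Set G.V}
    (hA : G.Dangerous s k A) (hB : G.Dangerous s k B)
    {p q : G.V} (hpA : p ∈ A) (hpB : p ∉ B) (hqB : q ∈ B) (hqA : q ∉ A)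
    {g : G.E} (hg : s ∈ G.ends g) (hgA : G.otherEnd s g ∈ A) (hgB : G.otherEnd s g ∈ B) :
    (G.cutSet A).ncard = k + 1 ∧ (G.cutSet B).ncard = k + 1 ∧
      (G.cutSet (A \ B)).ncard = k ∧ (G.cutSet (B \ A)).ncard = k ∧
      G.between (A ∩ B) ((A ∪ B)ᶜ) = {g} := by
  obtain ⟨hAne, hAs, hAc, hAcard⟩ := hA
  obtain ⟨hBne, hBs, hBc, hBcard⟩ := hB
  have hps : p ≠ s := fun h => hAs (h ▸ hpA)
  have hqs : q ≠ s := fun h => hBs (h ▸ hqB)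
  have hdAB : k ≤ (G.cutSet (A \ B)).ncard := by
    refine sep_le_cut hcon ⟨p, hpA, hpB⟩ (fun hc => hAs hc.1) ⟨q, ?_⟩
    exact mem_sep_compl (fun hc => hqA hc.1) hqs
  have hdBA : k ≤ (G.cutSet (B \ A)).ncard := by
    refine sep_le_cut hcon ⟨q, hqB, hqA⟩ (fun hc => hBs hc.1) ⟨p, ?_⟩
    exact mem_sep_compl (fun hc => hpB hc.1) hps
  have hkA : k ≤ (G.cutSet A).ncard := sep_le_cut hcon hAne hAs hAc
  have hkB : k ≤ (G.cutSet B).ncard := sep_le_cut hcon hBne hBs hBc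
  have hgmem : g ∈ G.between (A ∩ B) ((A ∪ B)ᶜ) :=
    s_edge_mem_between hg ⟨hgA, hgB⟩ (by simp [hAs, hBs])
  have hm : 1 ≤ (G.between (A ∩ B) ((A ∪ B)ᶜ)).ncard := by
    have := (Set.ncard_pos (Set.toFinite _)).2 ⟨g, hgmem⟩
    omega
  have hsub := submod_diff_diff (H := G) A B
  have hm1 : (G.between (A ∩ B) ((A ∪ B)ᶜ)).ncard = 1 := by omega
  refine ⟨by omega, by omega, by omega, by omega, ?_⟩
  obtain ⟨x, hx⟩ := Set.ncard_eq_one.1 hm1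
  rw [hx] at hgmem ⊢
  rw [Set.mem_singleton_iff.1 hgmem]

lemma uncross_tight (hcon : G.SKConnected s k) {A B : Set G.V}
    (hA : G.Dangerous s k A) (hB : G.Dangerous s k B)
    (hne : (A ∩ B).Nonempty) (hnd : ¬ G.Dangerous s k (A ∪ B))
    (hcompl : (((A ∪ B) ∪ {s})ᶜ).Nonempty) :
    (G.cutSet (A ∩ B)).ncard = k ∧ G.between (A \ B) (B \ A) = ∅ := by
  obtain ⟨hAne, hAs, hAc, hAcard⟩ := hA
  obtain ⟨hBne, hBs, hBc, hBcard⟩ := hB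
  obtain ⟨w, hw⟩ := hcompl
  obtain ⟨hwAB, hws⟩ := of_mem_sep_compl hw
  have hsU : s ∉ A ∪ B := by rintro (h | h); exacts [hAs h, hBs h]
  have hkU : k ≤ (G.cutSet (A ∪ B)).ncard := by
    refine sep_le_cut hcon (hAne.mono Set.subset_union_left) hsU ⟨w, mem_sep_compl hwAB hws⟩
  have hkU2 : k + 2 ≤ (G.cutSet (A ∪ B)).ncard := by
    by_contra hc
    exact hnd ⟨hAne.mono Set.subset_union_left, hsU,
      ⟨w, mem_sep_compl hwAB hws⟩, by omega⟩
  have hkI : k ≤ (G.cutSet (A ∩ B)).ncard := by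
    refine sep_le_cut hcon hne (fun hc => hAs hc.1) ⟨w, ?_⟩
    exact mem_sep_compl (fun hc => hwAB (Or.inl hc.1)) hws
  have hsub := submod_union_inter (H := G) A B
  constructor
  · omega
  · have : (G.between (A \ B) (B \ A)).ncard = 0 := by omega
    rwa [Set.ncard_eq_zero (Set.toFinite _)] at this

lemma merge_tight (hcon : G.SKConnected s k) {A B : Set G.V}
    (hAne : A.Nonempty) (hsA : s ∉ A) (hAk : (G.cutSet A).ncard ≤ k)
    (hB : G.Dangerous s k B) (hne : (A ∩ B).Nonempty)
    (hcompl : (((A ∪ B) ∪ {s})ᶜ).Nonempty) :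
    G.Dangerous s k (A ∪ B) := by
  obtain ⟨hBne, hBs, hBc, hBcard⟩ := hB
  obtain ⟨w, hw⟩ := hcompl
  obtain ⟨hwAB, hws⟩ := of_mem_sep_compl hw
  have hsU : s ∉ A ∪ B := by rintro (h | h); exacts [hsA h, hBs h]
  have hkI : k ≤ (G.cutSet (A ∩ B)).ncard := by
    refine sep_le_cut hcon hne (fun hc => hsA hc.1) ⟨w, ?_⟩
    exact mem_sep_compl (fun hc => hwAB (Or.inl hc.1)) hws
  have hsub := submod_union_inter (H := G) A B
  exact ⟨hAne.mono Set.subset_union_left, hsU, ⟨w, mem_sep_compl hwAB hws⟩, by omega⟩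

lemma deg_le_three {E1 E2 E3 : G.E} (hsub : G.incEdges s ⊆ {E1, E2, E3}) :
    G.deg s ≤ 3 := by
  calc G.deg s ≤ ({E1, E2, E3} : Set G.E).ncard :=
        Set.ncard_le_ncard hsub (Set.toFinite _)
    _ ≤ ({E2, E3} : Set G.E).ncard + 1 := Set.ncard_insert_le _ _
    _ ≤ (({E3} : Set G.E).ncard + 1) + 1 := by
        have := Set.ncard_insert_le E2 ({E3} : Set G.E)
        omega
    _ ≤ 3 := by rw [Set.ncard_singleton]

lemma exists_maximal_superset {𝒜 : Set (Set G.V)} {X : Set G.V} (hX : X ∈ 𝒜) :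
    ∃ M ∈ 𝒜, X ⊆ M ∧ ∀ Y ∈ 𝒜, M ⊆ Y → Y = M := by
  have hfin : {Y | Y ∈ 𝒜 ∧ X ⊆ Y}.Finite := Set.toFinite _
  obtain ⟨M, hM, hmax⟩ := Set.Finite.exists_maximalFor id _ hfin ⟨X, hX, subset_rfl⟩
  refine ⟨M, hM.1, hM.2, fun Y hY hMY => ?_⟩
  exact (hmax ⟨hY, hM.2.trans hMY⟩ hMY).antisymm hMY

/-- Characterisation of non-adjacency in the lifting graph. -/
lemma nonadj_char (hcon : G.SKConnected s k) (hk : 1 ≤ k)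
    {a b : ↥(G.incEdges s)} (hab : a ≠ b) :
    ¬ (G.liftingGraph s k).Adj a b ↔
      ∃ A, G.Dangerous s k A ∧ G.otherEnd s a.1 ∈ A ∧ G.otherEnd s b.1 ∈ A := by
  have hvalne : a.1 ≠ b.1 := fun h => hab (Subtype.ext h)
  have hadj_def : (G.liftingGraph s k).Adj a b ↔
      a ≠ b ∧ G.IsLiftable s k a.1 b.1 ∧ G.IsLiftable s k b.1 a.1 := Iff.rfl
  constructor
  · intro hnadj
    have hor : ¬ (G.lift s a.1 b.1).SKConnected s k ∨
        ¬ (G.lift s b.1 a.1).SKConnected s k := by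
      by_contra hc
      push_neg at hc
      exact hnadj (hadj_def.2 ⟨hab, ⟨hc.1, hc.2⟩, ⟨hc.2, hc.1⟩⟩)
    rcases hor with h | h
    · exact not_SK_dangerous hcon a.2 b.2 hvalne h
    · obtain ⟨A, hA, h1, h2⟩ := not_SK_dangerous hcon b.2 a.2 (Ne.symm hvalne) h
      exact ⟨A, hA, h2, h1⟩
  · rintro ⟨A, hA, ha, hb⟩ hadj
    exact dangerous_not_SK a.2 b.2 hvalne hk hA ha hb (hadj_def.1 hadj).2.1.1

lemma dangerous_nonadj (hk : 1 ≤ k) {a b : ↥(G.incEdges s)}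
    {A : Set G.V} (hA : G.Dangerous s k A)
    (ha : G.otherEnd s a.1 ∈ A) (hb : G.otherEnd s b.1 ∈ A) :
    ¬ (G.liftingGraph s k).Adj a b := by
  intro hadj
  have hvalne : a.1 ≠ b.1 := fun h => hadj.1 (Subtype.ext h)
  exact dangerous_not_SK a.2 b.2 hvalne hk hA ha hb hadj.2.1.1

end DangerousCalculus

section BigLemmas

open scoped Classical

variable {G : Multigraph} {s : G.V} {k : ℕ}

/-- There are at most two maximal dangerous sets containing the other end of a
given edge at `s`. -/
lemma not_three_maximal (hcon : G.SKConnected s k) (hk : 2 ≤ k) (hdeg : 4 ≤ G.deg s)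
    {f₀ : G.E} (hf₀ : s ∈ G.ends f₀) {M₁ M₂ M₃ : Set G.V}
    (hd₁ : G.Dangerous s k M₁) (hv₁ : G.otherEnd s f₀ ∈ M₁)
    (hmax₁ : ∀ Y, G.Dangerous s k Y → G.otherEnd s f₀ ∈ Y → M₁ ⊆ Y → Y = M₁)
    (hd₂ : G.Dangerous s k M₂) (hv₂ : G.otherEnd s f₀ ∈ M₂)
    (hmax₂ : ∀ Y, G.Dangerous s k Y → G.otherEnd s f₀ ∈ Y → M₂ ⊆ Y → Y = M₂)
    (hd₃ : G.Dangerous s k M₃) (hv₃ : G.otherEnd s f₀ ∈ M₃)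
    (hmax₃ : ∀ Y, G.Dangerous s k Y → G.otherEnd s f₀ ∈ Y → M₃ ⊆ Y → Y = M₃)
    (h12 : M₁ ≠ M₂) (h13 : M₁ ≠ M₃) (h23 : M₂ ≠ M₃) : False := by
  have hnot_sub : ∀ {A B : Set G.V}, G.Dangerous s k A → G.otherEnd s f₀ ∈ A →
      (∀ Y, G.Dangerous s k Y → G.otherEnd s f₀ ∈ Y → A ⊆ Y → Y = A) →
      G.Dangerous s k B → G.otherEnd s f₀ ∈ B → A ≠ B → ¬ A ⊆ B := by
    intro A B hdA hvA hmaxA hdB hvB hne hsub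
    exact hne ((hmaxA B hdB hvB hsub).symm)
  have hwit : ∀ {A B : Set G.V}, (¬ A ⊆ B) → ∃ p, p ∈ A ∧ p ∉ B :=
    fun h => Set.not_subset.1 h
  -- pairwise incomparability witnesses
  have hns12 : ¬ M₁ ⊆ M₂ := hnot_sub hd₁ hv₁ hmax₁ hd₂ hv₂ h12
  have hns21 : ¬ M₂ ⊆ M₁ := hnot_sub hd₂ hv₂ hmax₂ hd₁ hv₁ h12.symm
  have hns13 : ¬ M₁ ⊆ M₃ := hnot_sub hd₁ hv₁ hmax₁ hd₃ hv₃ h13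
  have hns31 : ¬ M₃ ⊆ M₁ := hnot_sub hd₃ hv₃ hmax₃ hd₁ hv₁ h13.symm
  have hns23 : ¬ M₂ ⊆ M₃ := hnot_sub hd₂ hv₂ hmax₂ hd₃ hv₃ h23
  have hns32 : ¬ M₃ ⊆ M₂ := hnot_sub hd₃ hv₃ hmax₃ hd₂ hv₂ h23.symm
  -- the U2 facts for incomparable pairs
  have hU2 : ∀ {A B : Set G.V}, G.Dangerous s k A → G.otherEnd s f₀ ∈ A →
      G.Dangerous s k B → G.otherEnd s f₀ ∈ B → ¬ A ⊆ B → ¬ B ⊆ A →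
      G.between (A ∩ B) ((A ∪ B)ᶜ) = {f₀} := by
    intro A B hdA hvA hdB hvB hnAB hnBA
    obtain ⟨p, hpA, hpB⟩ := hwit hnAB
    obtain ⟨q, hqB, hqA⟩ := hwit hnBA
    exact (U2 hcon hdA hdB hpA hpB hqB hqA hf₀ hvA hvB).2.2.2.2
  -- unions of two distinct maximal sets are not dangerous
  have hnd : ∀ {A B : Set G.V}, G.Dangerous s k A → G.otherEnd s f₀ ∈ A →
      (∀ Y, G.Dangerous s k Y → G.otherEnd s f₀ ∈ Y → A ⊆ Y → Y = A) →
      ¬ B ⊆ A → ¬ G.Dangerous s k (A ∪ B) := by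
    intro A B hdA hvA hmaxA hnBA hdU
    have hU : A ∪ B = A := hmaxA _ hdU (Or.inl hvA) Set.subset_union_left
    exact hnBA (hU ▸ Set.subset_union_right)
  -- in the non-covering case, the intersection of two maximal sets is inside
  -- the third
  have hinter_sub : ∀ {A B C : Set G.V}, G.Dangerous s k A → G.otherEnd s f₀ ∈ A →
      (∀ Y, G.Dangerous s k Y → G.otherEnd s f₀ ∈ Y → A ⊆ Y → Y = A) →
      G.Dangerous s k B → G.otherEnd s f₀ ∈ B →
      G.Dangerous s k C → G.otherEnd s f₀ ∈ C →
      (∀ Y, G.Dangerous s k Y → G.otherEnd s f₀ ∈ Y → C ⊆ Y → Y = C) →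
      ¬ A ⊆ B → ¬ B ⊆ A → ¬ C ⊆ A → (((A ∪ B) ∪ {s})ᶜ).Nonempty → A ∩ B ⊆ C := by
    intro A B C hdA hvA hmaxA hdB hvB hdC hvC hmaxC hnAB hnBA hnCA hcompl
    obtain ⟨hk', -⟩ := uncross_tight hcon hdA hdB ⟨_, hvA, hvB⟩
      (hnd hdA hvA hmaxA hnBA) hcompl
    have hdAB : G.Dangerous s k (A ∩ B) := by
      refine ⟨⟨_, hvA, hvB⟩, fun hc => hdA.2.1 hc.1, ?_, by omega⟩
      obtain ⟨p, hpA, hpB⟩ := hwit hnAB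
      exact ⟨p, mem_sep_compl (fun hc => hpB hc.2) (fun hc => hdA.2.1 (hc ▸ hpA))⟩
    by_contra hsubC
    have hCsub : ¬ C ⊆ A ∩ B := fun hc => hnCA (hc.trans Set.inter_subset_left)
    obtain ⟨p, hp1, hp2⟩ := Set.not_subset.1 hsubC
    obtain ⟨q, hq1, hq2⟩ := Set.not_subset.1 hCsub
    obtain ⟨h1, -⟩ := U2 hcon hdAB hdC hp1 hp2 hq1 hq2 hf₀ ⟨hvA, hvB⟩ hvC
    omega
  -- two coverings sharing a common set are impossible
  have htwocov : ∀ {X Y Z : Set G.V}, G.Dangerous s k X → G.otherEnd s f₀ ∈ X →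
      (∀ W, G.Dangerous s k W → G.otherEnd s f₀ ∈ W → X ⊆ W → W = X) →
      G.Dangerous s k Y → G.otherEnd s f₀ ∈ Y →
      (∀ W, G.Dangerous s k W → G.otherEnd s f₀ ∈ W → Y ⊆ W → W = Y) →
      G.Dangerous s k Z → G.otherEnd s f₀ ∈ Z →
      ¬ X ⊆ Y → ¬ Y ⊆ X → ¬ X ⊆ Z → ¬ Z ⊆ X → ¬ Y ⊆ Z → ¬ Z ⊆ Y →
      ¬ (((X ∪ Y) ∪ {s})ᶜ).Nonempty → ¬ (((X ∪ Z) ∪ {s})ᶜ).Nonempty → False := by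
    intro X Y Z hdX hvX hmaxX hdY hvY hmaxY hdZ hvZ
      hXY hYX hXZ hZX hYZ hZY hcov1 hcov2
    have hout : ∀ w, w ≠ s → w ∉ X → w ∈ Y ∧ w ∈ Z := by
      intro w hws hwX
      constructor
      · by_contra hwY
        exact hcov1 ⟨w, mem_sep_compl (by rintro (h | h); exacts [hwX h, hwY h]) hws⟩
      · by_contra hwZ
        exact hcov2 ⟨w, mem_sep_compl (by rintro (h | h); exacts [hwX h, hwZ h]) hws⟩
    by_cases hcov3 : (((Y ∪ Z) ∪ {s})ᶜ).Nonempty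
    · have hsubX : Y ∩ Z ⊆ X :=
        hinter_sub hdY hvY hmaxY hdZ hvZ hdX hvX hmaxX hYZ hZY hXY hcov3
      obtain ⟨w, hw⟩ := hdX.2.2.1
      obtain ⟨hwX, hws⟩ := of_mem_sep_compl hw
      exact hwX (hsubX (hout w hws hwX))
    · have hsub : G.incEdges s ⊆ {f₀, f₀, f₀} := by
        intro t ht
        have hvt : G.otherEnd s t ≠ s := otherEnd_ne ht
        have htmem : t = f₀ := by
          by_cases h1 : G.otherEnd s t ∈ X
          · by_cases h2 : G.otherEnd s t ∈ Y
            · have huniq := hU2 hdX hvX hdY hvY hXY hYX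
              have ht' : t ∈ G.between (X ∩ Y) ((X ∪ Y)ᶜ) :=
                s_edge_mem_between ht ⟨h1, h2⟩
                  (by simp [hdX.2.1, hdY.2.1])
              rw [huniq] at ht'
              exact ht'
            · have h3 : G.otherEnd s t ∈ Z := by
                by_contra h3
                exact hcov3 ⟨_, mem_sep_compl (by rintro (h | h); exacts [h2 h, h3 h]) hvt⟩
              have huniq := hU2 hdX hvX hdZ hvZ hXZ hZX
              have ht' : t ∈ G.between (X ∩ Z) ((X ∪ Z)ᶜ) :=
                s_edge_mem_between ht ⟨h1, h3⟩
                  (by simp [hdX.2.1, hdZ.2.1])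
              rw [huniq] at ht'
              exact ht'
          · obtain ⟨h2, h3⟩ := hout _ hvt h1
            have huniq := hU2 hdY hvY hdZ hvZ hYZ hZY
            have ht' : t ∈ G.between (Y ∩ Z) ((Y ∪ Z)ᶜ) :=
              s_edge_mem_between ht ⟨h2, h3⟩
                (by simp [hdY.2.1, hdZ.2.1])
            rw [huniq] at ht'
            exact ht'
        simp [htmem]
      have := deg_le_three hsub
      omega
  -- a covering pair (plus a third maximal set) is impossible
  have hcovcase : ∀ {A B C : Set G.V}, G.Dangerous s k A → G.otherEnd s f₀ ∈ A →
      (∀ W, G.Dangerous s k W → G.otherEnd s f₀ ∈ W → A ⊆ W → W = A) →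
      G.Dangerous s k B → G.otherEnd s f₀ ∈ B →
      (∀ W, G.Dangerous s k W → G.otherEnd s f₀ ∈ W → B ⊆ W → W = B) →
      G.Dangerous s k C → G.otherEnd s f₀ ∈ C →
      (∀ W, G.Dangerous s k W → G.otherEnd s f₀ ∈ W → C ⊆ W → W = C) →
      ¬ A ⊆ B → ¬ B ⊆ A → ¬ A ⊆ C → ¬ C ⊆ A → ¬ B ⊆ C → ¬ C ⊆ B →
      ¬ (((A ∪ B) ∪ {s})ᶜ).Nonempty → False := by
    intro A B C hdA hvA hmaxA hdB hvB hmaxB hdC hvC hmaxC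
      hAB hBA hAC hCA hBC hCB hcovAB
    by_cases hcovAC : (((A ∪ C) ∪ {s})ᶜ).Nonempty
    · by_cases hcovBC : (((B ∪ C) ∪ {s})ᶜ).Nonempty
      · have hsub1 : A ∩ C ⊆ B :=
          hinter_sub hdA hvA hmaxA hdC hvC hdB hvB hmaxB hAC hCA hBA hcovAC
        have hCB' : C ⊆ B := by
          intro x hxC
          have hxs : x ≠ s := fun hc => hdC.2.1 (hc ▸ hxC)
          have hxAB : x ∈ A ∪ B := by
            by_contra hc
            exact hcovAB ⟨x, mem_sep_compl hc hxs⟩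
          rcases hxAB with h | h
          · exact hsub1 ⟨h, hxC⟩
          · exact h
        exact hCB hCB'
      · have hcovBA : ¬ (((B ∪ A) ∪ {s})ᶜ).Nonempty := by
          rwa [Set.union_comm B A]
        exact htwocov hdB hvB hmaxB hdA hvA hmaxA hdC hvC
          hBA hAB hBC hCB hAC hCA hcovBA hcovBC
    · exact htwocov hdA hvA hmaxA hdB hvB hmaxB hdC hvC
        hAB hBA hAC hCA hBC hCB hcovAB hcovAC
  -- main case analysis
  by_cases c12 : (((M₁ ∪ M₂) ∪ {s})ᶜ).Nonempty
  · by_cases c13 : (((M₁ ∪ M₃) ∪ {s})ᶜ).Nonempty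
    · by_cases c23 : (((M₂ ∪ M₃) ∪ {s})ᶜ).Nonempty
      · -- all pairs tight
        have h12sub : M₁ ∩ M₂ ⊆ M₃ :=
          hinter_sub hd₁ hv₁ hmax₁ hd₂ hv₂ hd₃ hv₃ hmax₃ hns12 hns21 hns31 c12
        have h13sub : M₁ ∩ M₃ ⊆ M₂ :=
          hinter_sub hd₁ hv₁ hmax₁ hd₃ hv₃ hd₂ hv₂ hmax₂ hns13 hns31 hns21 c13
        have h23sub : M₂ ∩ M₃ ⊆ M₁ :=
          hinter_sub hd₂ hv₂ hmax₂ hd₃ hv₃ hd₁ hv₁ hmax₁ hns23 hns32 hns12 c23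
        have hcut : G.cutSet (M₁ ∩ M₂) ⊆ {f₀} := by
          rintro e' ⟨a, b, hab, ha, hb⟩
          have ha3 : a ∈ M₃ := h12sub ha
          by_cases hb1 : b ∈ M₁
          · have hb2 : b ∉ M₂ := fun hc => hb ⟨hb1, hc⟩
            have hb3 : b ∉ M₃ := fun hc => hb2 (h13sub ⟨hb1, hc⟩)
            have ht' : e' ∈ G.between (M₂ ∩ M₃) ((M₂ ∪ M₃)ᶜ) :=
              ⟨a, b, hab, ⟨ha.2, ha3⟩, by
                simp only [Set.mem_compl_iff, Set.mem_union, not_or]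
                exact ⟨hb2, hb3⟩⟩
            rw [hU2 hd₂ hv₂ hd₃ hv₃ hns23 hns32] at ht'
            exact ht'
          · by_cases hb2 : b ∈ M₂
            · have hb3 : b ∉ M₃ := fun hc => hb1 (h23sub ⟨hb2, hc⟩)
              have ht' : e' ∈ G.between (M₁ ∩ M₃) ((M₁ ∪ M₃)ᶜ) :=
                ⟨a, b, hab, ⟨ha.1, ha3⟩, by
                  simp only [Set.mem_compl_iff, Set.mem_union, not_or]
                  exact ⟨hb1, hb3⟩⟩
              rw [hU2 hd₁ hv₁ hd₃ hv₃ hns13 hns31] at ht'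
              exact ht'
            · have ht' : e' ∈ G.between (M₁ ∩ M₂) ((M₁ ∪ M₂)ᶜ) :=
                ⟨a, b, hab, ha, by
                  simp only [Set.mem_compl_iff, Set.mem_union, not_or]
                  exact ⟨hb1, hb2⟩⟩
              rw [hU2 hd₁ hv₁ hd₂ hv₂ hns12 hns21] at ht'
              exact ht'
        have hW : k ≤ (G.cutSet (M₁ ∩ M₂)).ncard := by
          obtain ⟨p, hp1, hp2⟩ := hwit hns12
          refine sep_le_cut hcon ⟨_, hv₁, hv₂⟩ (fun hc => hd₁.2.1 hc.1)
            ⟨p, mem_sep_compl (fun hc => hp2 hc.2) (fun hc => hd₁.2.1 (hc ▸ hp1))⟩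
        have hle1 : (G.cutSet (M₁ ∩ M₂)).ncard ≤ 1 := by
          calc (G.cutSet (M₁ ∩ M₂)).ncard ≤ ({f₀} : Set G.E).ncard :=
                Set.ncard_le_ncard hcut (Set.toFinite _)
            _ = 1 := Set.ncard_singleton _
        omega
      · exact hcovcase hd₂ hv₂ hmax₂ hd₃ hv₃ hmax₃ hd₁ hv₁ hmax₁
          hns23 hns32 hns21 hns12 hns31 hns13 c23
    · exact hcovcase hd₁ hv₁ hmax₁ hd₃ hv₃ hmax₃ hd₂ hv₂ hmax₂
        hns13 hns31 hns12 hns21 hns32 hns23 c13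
  · exact hcovcase hd₁ hv₁ hmax₁ hd₂ hv₂ hmax₂ hd₃ hv₃ hmax₃
      hns12 hns21 hns13 hns31 hns23 hns32 c12

/-- No dangerous set can contain one vertex from each "side" of the two
maximal dangerous sets through `otherEnd s f₀`. -/
lemma cross_pair_no_dangerous (hcon : G.SKConnected s k) (hk : 2 ≤ k)
    (hdeg : 4 ≤ G.deg s) {f₀ : G.E} (hf₀ : s ∈ G.ends f₀) {M₁ M₂ : Set G.V}
    (hd₁ : G.Dangerous s k M₁) (hv₁ : G.otherEnd s f₀ ∈ M₁)
    (hd₂ : G.Dangerous s k M₂) (hv₂ : G.otherEnd s f₀ ∈ M₂)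
    (hmax₁ : ∀ Y, G.Dangerous s k Y → G.otherEnd s f₀ ∈ Y → M₁ ⊆ Y → Y = M₁)
    (hmax₂ : ∀ Y, G.Dangerous s k Y → G.otherEnd s f₀ ∈ Y → M₂ ⊆ Y → Y = M₂)
    (hMM : M₁ ≠ M₂)
    (h2max : ∀ Y, G.Dangerous s k Y → G.otherEnd s f₀ ∈ Y → Y ⊆ M₁ ∨ Y ⊆ M₂)
    {g h : G.E} (hg : s ∈ G.ends g) (hh : s ∈ G.ends h)
    (hp1 : G.otherEnd s g ∈ M₁) (hp2 : G.otherEnd s g ∉ M₂)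
    (hq2 : G.otherEnd s h ∈ M₂) (hq1 : G.otherEnd s h ∉ M₁)
    {D : Set G.V} (hD : G.Dangerous s k D)
    (hgD : G.otherEnd s g ∈ D) (hhD : G.otherEnd s h ∈ D) : False := by
  have hps : G.otherEnd s g ≠ s := otherEnd_ne hg
  have hqs : G.otherEnd s h ≠ s := otherEnd_ne hh
  have hns12 : ¬ M₁ ⊆ M₂ := fun hsub => hMM ((hmax₁ M₂ hd₂ hv₂ hsub).symm)
  have hns21 : ¬ M₂ ⊆ M₁ := fun hsub => hMM ((hmax₂ M₁ hd₁ hv₁ hsub))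
  have c0 : G.otherEnd s f₀ ∉ D := by
    intro hc
    rcases h2max D hD hc with hsub | hsub
    · exact hq1 (hsub hhD)
    · exact hp2 (hsub hgD)
  obtain ⟨-, -, -, -, hbet12⟩ := U2 hcon hd₁ hd₂ hp1 hp2 hq2 hq1 hf₀ hv₁ hv₂
  obtain ⟨-, -, hD1k, hM1Dk, hbetD1⟩ := U2 hcon hD hd₁ hhD hq1 hv₁ c0 hg hgD hp1
  obtain ⟨-, -, hD2k, hM2Dk, hbetD2⟩ := U2 hcon hD hd₂ hgD hp2 hv₂ c0 hh hhD hq2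
  -- the merge arguments: everything lives inside `M₁ ∪ M₂ ∪ D`
  have c4 : ∀ x, x ∈ M₁ → x ∉ D → x ∈ M₂ := by
    intro x hx1 hxD
    have hdU : G.Dangerous s k ((M₁ \ D) ∪ M₂) := by
      refine merge_tight hcon ⟨_, hv₁, c0⟩ (fun hc => hd₁.2.1 hc.1) (le_of_eq hM1Dk)
        hd₂ ⟨_, ⟨hv₁, c0⟩, hv₂⟩ ⟨G.otherEnd s g, ?_⟩
      refine mem_sep_compl ?_ hps
      rintro (hc | hc)
      · exact hc.2 hgD
      · exact hp2 hc
    rcases h2max _ hdU (Or.inr hv₂) with hsub | hsub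
    · exact absurd (Set.subset_union_right.trans hsub) hns21
    · exact hsub (Or.inl ⟨hx1, hxD⟩)
  have c5 : ∀ x, x ∈ M₂ → x ∉ D → x ∈ M₁ := by
    intro x hx2 hxD
    have hdU : G.Dangerous s k ((M₂ \ D) ∪ M₁) := by
      refine merge_tight hcon ⟨_, hv₂, c0⟩ (fun hc => hd₂.2.1 hc.1) (le_of_eq hM2Dk)
        hd₁ ⟨_, ⟨hv₂, c0⟩, hv₁⟩ ⟨G.otherEnd s h, ?_⟩
      refine mem_sep_compl ?_ hqs
      rintro (hc | hc)
      · exact hc.2 hhD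
      · exact hq1 hc
    rcases h2max _ hdU (Or.inr hv₁) with hsub | hsub
    · exact hsub (Or.inl ⟨hx2, hxD⟩)
    · exact absurd (Set.subset_union_right.trans hsub) hns12
  have c7 : ∀ x, x ∈ D → x ∉ M₂ → x ∈ M₁ := by
    intro x hxD hx2
    have hdU : G.Dangerous s k ((D \ M₂) ∪ M₁) := by
      refine merge_tight hcon ⟨_, hgD, hp2⟩ (fun hc => hD.2.1 hc.1) (le_of_eq hD2k)
        hd₁ ⟨_, ⟨hgD, hp2⟩, hp1⟩ ⟨G.otherEnd s h, ?_⟩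
      refine mem_sep_compl ?_ hqs
      rintro (hc | hc)
      · exact hc.2 hq2
      · exact hq1 hc
    rcases h2max _ hdU (Or.inr hv₁) with hsub | hsub
    · exact hsub (Or.inl ⟨hxD, hx2⟩)
    · exact absurd (Set.subset_union_right.trans hsub) hns12
  have c8 : ∀ x, x ∈ D → x ∉ M₁ → x ∈ M₂ := by
    intro x hxD hx1
    have hdU : G.Dangerous s k ((D \ M₁) ∪ M₂) := by
      refine merge_tight hcon ⟨_, hhD, hq1⟩ (fun hc => hD.2.1 hc.1) (le_of_eq hD1k)
        hd₂ ⟨_, ⟨hhD, hq1⟩, hq2⟩ ⟨G.otherEnd s g, ?_⟩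
      refine mem_sep_compl ?_ hps
      rintro (hc | hc)
      · exact hc.2 hp1
      · exact hp2 hc
    rcases h2max _ hdU (Or.inr hv₂) with hsub | hsub
    · exact absurd (Set.subset_union_right.trans hsub) hns21
    · exact hsub (Or.inl ⟨hxD, hx1⟩)
  -- the three classification helpers
  have htf₀ : ∀ t, s ∈ G.ends t → G.otherEnd s t ∈ M₁ → G.otherEnd s t ∈ M₂ →
      t = f₀ := by
    intro t ht h1 h2
    have ht' : t ∈ G.between (M₁ ∩ M₂) ((M₁ ∪ M₂)ᶜ) :=
      s_edge_mem_between ht ⟨h1, h2⟩ (by simp [hd₁.2.1, hd₂.2.1])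
    rw [hbet12] at ht'
    exact ht'
  have htg : ∀ t, s ∈ G.ends t → G.otherEnd s t ∈ D → G.otherEnd s t ∈ M₁ →
      t = g := by
    intro t ht h1 h2
    have ht' : t ∈ G.between (D ∩ M₁) ((D ∪ M₁)ᶜ) :=
      s_edge_mem_between ht ⟨h1, h2⟩ (by simp [hD.2.1, hd₁.2.1])
    rw [hbetD1] at ht'
    exact ht'
  have hth : ∀ t, s ∈ G.ends t → G.otherEnd s t ∈ D → G.otherEnd s t ∈ M₂ →
      t = h := by
    intro t ht h1 h2
    have ht' : t ∈ G.between (D ∩ M₂) ((D ∪ M₂)ᶜ) :=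
      s_edge_mem_between ht ⟨h1, h2⟩ (by simp [hD.2.1, hd₂.2.1])
    rw [hbetD2] at ht'
    exact ht'
  have hdeg3 : ¬ (∀ t, t ∈ G.incEdges s → t = f₀ ∨ t = g ∨ t = h) := by
    intro hc
    have hsub : G.incEdges s ⊆ {f₀, g, h} := by
      intro t ht
      rcases hc t ht with rfl | rfl | rfl <;> simp
    have := deg_le_three hsub
    omega
  -- dispose of the covering cases
  by_cases cD1 : (((D ∪ M₁) ∪ {s})ᶜ).Nonempty
  swap
  · refine hdeg3 (fun t ht => ?_)
    have hts : G.otherEnd s t ≠ s := otherEnd_ne ht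
    have htDM : G.otherEnd s t ∈ D ∪ M₁ := by
      by_contra hc
      exact cD1 ⟨_, mem_sep_compl hc hts⟩
    by_cases h1 : G.otherEnd s t ∈ D
    · by_cases h2 : G.otherEnd s t ∈ M₂
      · exact Or.inr (Or.inr (hth t ht h1 h2))
      · exact Or.inr (Or.inl (htg t ht h1 (c7 _ h1 h2)))
    · have h2 : G.otherEnd s t ∈ M₁ := htDM.resolve_left h1
      exact Or.inl (htf₀ t ht h2 (c4 _ h2 h1))
  by_cases cD2 : (((D ∪ M₂) ∪ {s})ᶜ).Nonempty
  swap
  · refine hdeg3 (fun t ht => ?_)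
    have hts : G.otherEnd s t ≠ s := otherEnd_ne ht
    have htDM : G.otherEnd s t ∈ D ∪ M₂ := by
      by_contra hc
      exact cD2 ⟨_, mem_sep_compl hc hts⟩
    by_cases h1 : G.otherEnd s t ∈ D
    · by_cases h2 : G.otherEnd s t ∈ M₁
      · exact Or.inr (Or.inl (htg t ht h1 h2))
      · exact Or.inr (Or.inr (hth t ht h1 (c8 _ h1 h2)))
    · have h2 : G.otherEnd s t ∈ M₂ := htDM.resolve_left h1
      exact Or.inl (htf₀ t ht (c5 _ h2 h1) h2)
  by_cases c12 : (((M₁ ∪ M₂) ∪ {s})ᶜ).Nonempty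
  swap
  · refine hdeg3 (fun t ht => ?_)
    have hts : G.otherEnd s t ≠ s := otherEnd_ne ht
    have htMM : G.otherEnd s t ∈ M₁ ∪ M₂ := by
      by_contra hc
      exact c12 ⟨_, mem_sep_compl hc hts⟩
    rcases htMM with h1 | h2
    · by_cases hD' : G.otherEnd s t ∈ D
      · exact Or.inr (Or.inl (htg t ht hD' h1))
      · exact Or.inl (htf₀ t ht h1 (c4 _ h1 hD'))
    · by_cases hD' : G.otherEnd s t ∈ D
      · exact Or.inr (Or.inr (hth t ht hD' h2))
      · exact Or.inl (htf₀ t ht (c5 _ h2 hD') h2)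
  -- now all three pairs are "tight"
  have ndD1 : ¬ G.Dangerous s k (D ∪ M₁) := by
    intro hdU
    rcases h2max _ hdU (Or.inr hv₁) with hsub | hsub
    · exact hq1 (hsub (Or.inl hhD))
    · exact hns12 (Set.subset_union_right.trans hsub)
  have ndD2 : ¬ G.Dangerous s k (D ∪ M₂) := by
    intro hdU
    rcases h2max _ hdU (Or.inr hv₂) with hsub | hsub
    · exact hns21 (Set.subset_union_right.trans hsub)
    · exact hp2 (hsub (Or.inl hgD))
  have tD1 := uncross_tight hcon hD hd₁ ⟨_, hgD, hp1⟩ ndD1 cD1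
  have tD2 := uncross_tight hcon hD hd₂ ⟨_, hhD, hq2⟩ ndD2 cD2
  by_cases hT : (D ∩ (M₁ ∩ M₂)).Nonempty
  · -- merge `D ∩ M₁` with `M₂`
    obtain ⟨x, hxD, hx1, hx2⟩ := hT
    by_cases hcompl : ((((D ∩ M₁) ∪ M₂) ∪ {s})ᶜ).Nonempty
    · have hdU : G.Dangerous s k ((D ∩ M₁) ∪ M₂) := by
        refine merge_tight hcon ⟨_, hgD, hp1⟩ (fun hc => hD.2.1 hc.1)
          (le_of_eq tD1.1) hd₂ ⟨x, ⟨hxD, hx1⟩, hx2⟩ hcompl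
      rcases h2max _ hdU (Or.inr hv₂) with hsub | hsub
      · exact hns21 (Set.subset_union_right.trans hsub)
      · exact hp2 (hsub (Or.inl ⟨hgD, hp1⟩))
    · refine hdeg3 (fun t ht => ?_)
      have hts : G.otherEnd s t ≠ s := otherEnd_ne ht
      have htM : G.otherEnd s t ∈ (D ∩ M₁) ∪ M₂ := by
        by_contra hc
        exact hcompl ⟨_, mem_sep_compl hc hts⟩
      rcases htM with ⟨h1, h2⟩ | h2
      · exact Or.inr (Or.inl (htg t ht h1 h2))
      · by_cases hD' : G.otherEnd s t ∈ D
        · exact Or.inr (Or.inr (hth t ht hD' h2))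
        · exact Or.inl (htf₀ t ht (c5 _ h2 hD') h2)
  · -- `D ∩ M₁ ∩ M₂ = ∅` and the cut of `M₁ ∩ M₂` is just `f₀`
    have hcut : G.cutSet (M₁ ∩ M₂) ⊆ {f₀} := by
      rintro e' ⟨a, b, hab, ha, hb⟩
      have haD : a ∉ D := fun hc => hT ⟨a, hc, ha⟩
      by_cases hb1 : b ∈ M₁
      · have hb2 : b ∉ M₂ := fun hc => hb ⟨hb1, hc⟩
        have hbD : b ∈ D := by
          by_contra hbD
          exact hb2 (c4 b hb1 hbD)
        have ht' : e' ∈ G.between (D \ M₂) (M₂ \ D) :=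
          ⟨b, a, by rw [hab, Sym2.eq_swap], ⟨hbD, hb2⟩, ⟨ha.2, haD⟩⟩
        rw [tD2.2] at ht'
        exact absurd ht' (Set.notMem_empty e')
      · by_cases hb2 : b ∈ M₂
        · have hbD : b ∈ D := by
            by_contra hbD
            exact hb1 (c5 b hb2 hbD)
          have ht' : e' ∈ G.between (D \ M₁) (M₁ \ D) :=
            ⟨b, a, by rw [hab, Sym2.eq_swap], ⟨hbD, hb1⟩, ⟨ha.1, haD⟩⟩
          rw [tD1.2] at ht'
          exact absurd ht' (Set.notMem_empty e')
        · have ht' : e' ∈ G.between (M₁ ∩ M₂) ((M₁ ∪ M₂)ᶜ) :=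
            ⟨a, b, hab, ha, by
              simp only [Set.mem_compl_iff, Set.mem_union, not_or]
              exact ⟨hb1, hb2⟩⟩
          rw [hbet12] at ht'
          exact ht'
    have hW : k ≤ (G.cutSet (M₁ ∩ M₂)).ncard := by
      refine sep_le_cut hcon ⟨_, hv₁, hv₂⟩ (fun hc => hd₁.2.1 hc.1)
        ⟨G.otherEnd s g, mem_sep_compl (fun hc => hp2 hc.2) hps⟩
    have hle1 : (G.cutSet (M₁ ∩ M₂)).ncard ≤ 1 := by
      calc (G.cutSet (M₁ ∩ M₂)).ncard ≤ ({f₀} : Set G.E).ncard :=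
            Set.ncard_le_ncard hcut (Set.toFinite _)
        _ = 1 := Set.ncard_singleton _
    omega

end BigLemmas

end Multigraph

/-- no three distinct maximal independent sets of the lifting
graph have a common vertex. -/
theorem no_three_maxIndep_common (G : Multigraph) (s : G.V) (k : ℕ)
    (hk : 2 ≤ k) (hdeg : 4 ≤ G.deg s) (hcon : G.SKConnected s k)
    (I₁ I₂ I₃ : Set ↥(G.incEdges s))
    (h₁ : MaxIndepSet (G.liftingGraph s k) I₁)
    (h₂ : MaxIndepSet (G.liftingGraph s k) I₂)
    (h₃ : MaxIndepSet (G.liftingGraph s k) I₃)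
    (h12 : I₁ ≠ I₂) (h13 : I₁ ≠ I₃) (h23 : I₂ ≠ I₃) :
    I₁ ∩ I₂ ∩ I₃ = ∅ := by
  classical
  rw [← Set.not_nonempty_iff_eq_empty]
  rintro ⟨f₀', hf₀'⟩
  obtain ⟨⟨hfI₁, hfI₂⟩, hfI₃⟩ := hf₀'
  have hf₀ : s ∈ G.ends f₀'.1 := f₀'.2
  have hk1 : 1 ≤ k := by omega
  -- no maximal independent set containing `f₀'` is the singleton `{f₀'}`
  have hnotsing : ∀ I, MaxIndepSet (G.liftingGraph s k) I → f₀' ∈ I →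
      ∀ J, MaxIndepSet (G.liftingGraph s k) J → f₀' ∈ J → I = {f₀'} → J = {f₀'} := by
    intro I hI hfI J hJ hfJ hIsing
    have hJsub : J ⊆ {f₀'} := by
      intro g hgJ
      by_contra hgne
      rw [Set.mem_singleton_iff] at hgne
      have hKind : IndepSet (G.liftingGraph s k) {f₀', g} := by
        intro a ha b hb
        have ha' : a = f₀' ∨ a = g := by simpa using ha
        have hb' : b = f₀' ∨ b = g := by simpa using hb
        rcases ha' with rfl | rfl <;> rcases hb' with rfl | rfl
        · exact (G.liftingGraph s k).irrefl
        · exact hJ.1 _ hfJ _ hgJ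
        · exact hJ.1 _ hgJ _ hfJ
        · exact (G.liftingGraph s k).irrefl
      have hIK : I ⊆ {f₀', g} := by
        rw [hIsing]
        intro x hx
        rw [Set.mem_singleton_iff] at hx
        subst hx
        exact Set.mem_insert _ _
      have := hI.2 _ hKind hIK
      have hgI : g ∈ I := by
        rw [← this]
        exact Set.mem_insert_iff.2 (Or.inr rfl)
      rw [hIsing, Set.mem_singleton_iff] at hgI
      exact hgne hgI
    exact Set.Subset.antisymm hJsub (by
      intro x hx
      rw [Set.mem_singleton_iff] at hx
      subst hx
      exact hfJ)
  have hI₁ne : I₁ ≠ {f₀'} := by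
    intro hc
    exact h12 (hc.trans (hnotsing I₁ h₁ hfI₁ I₂ h₂ hfI₂ hc).symm)
  -- an element of `I₁` different from `f₀'`
  obtain ⟨g₁, hg₁I, hg₁ne⟩ : ∃ g, g ∈ I₁ ∧ g ≠ f₀' := by
    by_contra hc
    push_neg at hc
    apply hI₁ne
    apply Set.Subset.antisymm
    · intro x hx
      rw [Set.mem_singleton_iff]
      exact hc x hx
    · intro x hx
      rw [Set.mem_singleton_iff] at hx
      subst hx
      exact hfI₁
  have hnadj₁ : ¬ (G.liftingGraph s k).Adj f₀' g₁ := h₁.1 _ hfI₁ _ hg₁I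
  obtain ⟨A₀, hA₀, hA₀f, hA₀g⟩ := (Multigraph.nonadj_char hcon hk1 hg₁ne.symm).1 hnadj₁
  -- a maximal dangerous set through `otherEnd s f₀'`
  obtain ⟨M₁, hM₁mem, hA₀M₁, hM₁max⟩ := Multigraph.exists_maximal_superset
    (𝒜 := {A | G.Dangerous s k A ∧ G.otherEnd s f₀'.1 ∈ A}) ⟨hA₀, hA₀f⟩
  have hd₁ : G.Dangerous s k M₁ := hM₁mem.1
  have hv₁ : G.otherEnd s f₀'.1 ∈ M₁ := hM₁mem.2
  have hmax₁ : ∀ Y, G.Dangerous s k Y → G.otherEnd s f₀'.1 ∈ Y → M₁ ⊆ Y → Y = M₁ :=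
    fun Y a b c => hM₁max Y ⟨a, b⟩ c
  -- a second maximal dangerous set (possibly equal to the first), such that
  -- every dangerous set through `otherEnd s f₀'` is below one of the two
  obtain ⟨M₂, hd₂, hv₂, hmax₂, h2max⟩ :
      ∃ M₂, G.Dangerous s k M₂ ∧ G.otherEnd s f₀'.1 ∈ M₂ ∧
        (∀ Y, G.Dangerous s k Y → G.otherEnd s f₀'.1 ∈ Y → M₂ ⊆ Y → Y = M₂) ∧
        (∀ Y, G.Dangerous s k Y → G.otherEnd s f₀'.1 ∈ Y → Y ⊆ M₁ ∨ Y ⊆ M₂) := by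
    by_cases hex : ∃ M₂, (G.Dangerous s k M₂ ∧ G.otherEnd s f₀'.1 ∈ M₂) ∧
        (∀ Y, G.Dangerous s k Y → G.otherEnd s f₀'.1 ∈ Y → M₂ ⊆ Y → Y = M₂) ∧ M₂ ≠ M₁
    · obtain ⟨M₂, hm, hmax₂', hne⟩ := hex
      refine ⟨M₂, hm.1, hm.2, hmax₂', ?_⟩
      intro Y hdY hvY
      obtain ⟨MY, hMYmem, hYMY, hMYmax⟩ := Multigraph.exists_maximal_superset
        (𝒜 := {A | G.Dangerous s k A ∧ G.otherEnd s f₀'.1 ∈ A}) ⟨hdY, hvY⟩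
      by_cases e1 : MY = M₁
      · exact Or.inl (e1 ▸ hYMY)
      by_cases e2 : MY = M₂
      · exact Or.inr (e2 ▸ hYMY)
      exact (Multigraph.not_three_maximal hcon hk hdeg hf₀ hd₁ hv₁ hmax₁ hm.1 hm.2 hmax₂'
        hMYmem.1 hMYmem.2 (fun Z a b c => hMYmax Z ⟨a, b⟩ c)
        hne.symm (Ne.symm e1) (Ne.symm e2)).elim
    · push_neg at hex
      refine ⟨M₁, hd₁, hv₁, hmax₁, ?_⟩
      intro Y hdY hvY
      obtain ⟨MY, hMYmem, hYMY, hMYmax⟩ := Multigraph.exists_maximal_superset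
        (𝒜 := {A | G.Dangerous s k A ∧ G.otherEnd s f₀'.1 ∈ A}) ⟨hdY, hvY⟩
      have : MY = M₁ := hex MY ⟨hMYmem.1, hMYmem.2⟩
        (fun Z a b c => hMYmax Z ⟨a, b⟩ c)
      exact Or.inl (this ▸ hYMY)
  -- the independent sets `E(M)`
  have hEind : ∀ (M : Set G.V), G.Dangerous s k M →
      IndepSet (G.liftingGraph s k) {t : ↥(G.incEdges s) | G.otherEnd s t.1 ∈ M} := by
    intro M hdM a ha b hb
    exact Multigraph.dangerous_nonadj hk1 hdM ha hb
  -- every maximal independent set containing `f₀'` is `E(M₁)` or `E(M₂)`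
  have hIeq : ∀ I, MaxIndepSet (G.liftingGraph s k) I → f₀' ∈ I →
      I = {t : ↥(G.incEdges s) | G.otherEnd s t.1 ∈ M₁} ∨
        I = {t : ↥(G.incEdges s) | G.otherEnd s t.1 ∈ M₂} := by
    intro I hI hfI
    have hsub : ∀ t, t ∈ I → G.otherEnd s t.1 ∈ M₁ ∨ G.otherEnd s t.1 ∈ M₂ := by
      intro t htI
      by_cases hte : t = f₀'
      · subst hte; exact Or.inl hv₁
      · obtain ⟨A, hA, hAt, hAf⟩ :=
          (Multigraph.nonadj_char hcon hk1 hte).1 (hI.1 _ htI _ hfI)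
        rcases h2max A hA hAf with hs1 | hs1
        · exact Or.inl (hs1 hAt)
        · exact Or.inr (hs1 hAt)
    by_cases hsub1 : I ⊆ {t : ↥(G.incEdges s) | G.otherEnd s t.1 ∈ M₁}
    · exact Or.inl ((hI.2 _ (hEind M₁ hd₁) hsub1).symm)
    by_cases hsub2 : I ⊆ {t : ↥(G.incEdges s) | G.otherEnd s t.1 ∈ M₂}
    · exact Or.inr ((hI.2 _ (hEind M₂ hd₂) hsub2).symm)
    exfalso
    obtain ⟨b, hbI, hb1⟩ := Set.not_subset.1 hsub1
    obtain ⟨a, haI, ha2⟩ := Set.not_subset.1 hsub2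
    rw [Set.mem_setOf_eq] at hb1 ha2
    have hb2 : G.otherEnd s b.1 ∈ M₂ := (hsub b hbI).resolve_left hb1
    have ha1 : G.otherEnd s a.1 ∈ M₁ := (hsub a haI).resolve_right ha2
    have hane : a ≠ b := fun hc => hb1 (hc ▸ ha1)
    have hM₁₂ : M₁ ≠ M₂ := fun hc => ha2 (hc ▸ ha1)
    obtain ⟨D, hDd, hDa, hDb⟩ := (Multigraph.nonadj_char hcon hk1 hane).1 (hI.1 _ haI _ hbI)
    exact Multigraph.cross_pair_no_dangerous hcon hk hdeg hf₀ hd₁ hv₁ hd₂ hv₂ hmax₁ hmax₂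
      hM₁₂ h2max a.2 b.2 ha1 ha2 hb2 hb1 hDd hDa hDb
  rcases hIeq I₁ h₁ hfI₁ with e1 | e1 <;> rcases hIeq I₂ h₂ hfI₂ with e2 | e2 <;>
    rcases hIeq I₃ h₃ hfI₃ with e3 | e3
  · exact h12 (e1.trans e2.symm)
  · exact h12 (e1.trans e2.symm)
  · exact h13 (e1.trans e3.symm)
  · exact h23 (e2.trans e3.symm)
  · exact h23 (e2.trans e3.symm)
  · exact h13 (e1.trans e3.symm)
  · exact h12 (e1.trans e2.symm)
  · exact h12 (e1.trans e2.symm)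
end

section
/- For any finite simple graph H, the complement of H is connected if and only if the independence graph I(H) is connected. -/
section Aux

variable {α : Type} [Fintype α]

lemma exists_maxIndep (H : SimpleGraph α) {I : Set α} (hI : IndepSet H I) :
    ∃ J, I ⊆ J ∧ MaxIndepSet H J := by
  obtain ⟨J, hJmem, hJmax⟩ := Set.Finite.exists_maximalFor id
    {J | IndepSet H J ∧ I ⊆ J} (Set.toFinite _) ⟨I, hI, subset_rfl⟩
  exact ⟨J, hJmem.2, hJmem.1,
    fun K hK hJK => (hJmax ⟨hK, hJmem.2.trans hJK⟩ hJK).antisymm hJK⟩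

lemma singleton_indep (H : SimpleGraph α) (a : α) : IndepSet H {a} := by
  intro x hx y hy
  simp only [Set.mem_singleton_iff] at hx hy
  subst hx; subst hy; exact H.irrefl

lemma maxIndep_nonempty [Nonempty α] {H : SimpleGraph α} {I : Set α}
    (h : MaxIndepSet H I) : I.Nonempty := by
  rw [Set.nonempty_iff_ne_empty]
  intro he
  obtain ⟨a⟩ := ‹Nonempty α›
  have := h.2 {a} (singleton_indep H a) (by simp [he])
  simp [he] at this

lemma reach_of_mem_inter {H : SimpleGraph α}
    (I J : {I : Set α // MaxIndepSet H I}) (a : α) (ha : a ∈ I.1) (hb : a ∈ J.1) :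
    (independenceGraph H).Reachable I J := by
  by_cases h : I = J
  · exact h ▸ SimpleGraph.Reachable.refl I
  · exact SimpleGraph.Adj.reachable ⟨h, a, ha, hb⟩

lemma indep_reach {H : SimpleGraph α} {I : Set α} (hI : IndepSet H I)
    {a b : α} (ha : a ∈ I) (hb : b ∈ I) : Hᶜ.Reachable a b := by
  by_cases h : a = b
  · exact h ▸ SimpleGraph.Reachable.refl a
  · exact SimpleGraph.Adj.reachable ((SimpleGraph.compl_adj H a b).2 ⟨h, hI a ha b hb⟩)

end Aux

/-- the complement of a (nonempty) finite simple graph is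
connected iff its independence graph is connected. -/
theorem complement_connected_iff_independenceGraph_connected
    {α : Type} [Fintype α] [Nonempty α] (H : SimpleGraph α) :
    Hᶜ.Connected ↔ (independenceGraph H).Connected := by
  constructor
  · intro hc
    have hne : Nonempty {I : Set α // MaxIndepSet H I} := by
      obtain ⟨J, -, hJ⟩ := exists_maxIndep H (I := ∅) (by intro x hx; simp at hx)
      exact ⟨⟨J, hJ⟩⟩
    have key : ∀ (x y : α), Hᶜ.Walk x y → ∀ (I J : {I : Set α // MaxIndepSet H I}),
        x ∈ I.1 → y ∈ J.1 → (independenceGraph H).Reachable I J := by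
      intro x y w
      induction w with
      | nil =>
        intro I J ha hb
        exact reach_of_mem_inter I J _ ha hb
      | @cons x m y hxm w ih =>
        intro I J ha hb
        rw [SimpleGraph.compl_adj H] at hxm
        have hind : IndepSet H {x, m} := by
          intro u hu v hv
          simp only [Set.mem_insert_iff, Set.mem_singleton_iff] at hu hv
          rcases hu with rfl | rfl <;> rcases hv with rfl | rfl
          · exact H.irrefl
          · exact hxm.2
          · exact fun h => hxm.2 h.symm
          · exact H.irrefl
        obtain ⟨K, hKsub, hK⟩ := exists_maxIndep H hind
        have hx : x ∈ K := hKsub (Set.mem_insert x {m})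
        have hm : m ∈ K := hKsub (Set.mem_insert_of_mem x rfl)
        exact (reach_of_mem_inter I ⟨K, hK⟩ x ha hx).trans (ih ⟨K, hK⟩ J hm hb)
    haveI := hne
    refine SimpleGraph.Connected.mk fun I J => ?_
    obtain ⟨a, ha⟩ := maxIndep_nonempty I.2
    obtain ⟨b, hb⟩ := maxIndep_nonempty J.2
    obtain ⟨w⟩ := hc.preconnected a b
    exact key a b w I J ha hb
  · intro hc
    have key : ∀ (X Y : {I : Set α // MaxIndepSet H I}),
        (independenceGraph H).Walk X Y →
        ∀ u ∈ X.1, ∀ v ∈ Y.1, Hᶜ.Reachable u v := by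
      intro X Y w
      induction w with
      | nil =>
        intro u hu v hv
        rename_i Z
        exact indep_reach Z.2.1 hu hv
      | @cons A B Y hadj w ih =>
        intro u hu v hv
        obtain ⟨-, c, hcA, hcB⟩ := hadj
        exact (indep_reach A.2.1 hu hcA).trans (ih c hcB v hv)
    refine SimpleGraph.Connected.mk fun a b => ?_
    obtain ⟨I, haI, hI⟩ := exists_maxIndep H (singleton_indep H a)
    obtain ⟨J, hbJ, hJ⟩ := exists_maxIndep H (singleton_indep H b)
    obtain ⟨w⟩ := hc.preconnected ⟨I, hI⟩ ⟨J, hJ⟩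
    exact key ⟨I, hI⟩ ⟨J, hJ⟩ w a (haI rfl) b (hbJ rfl)
end

section
/- Let B be a set of vertices in a k-edge-connected-ignoring-s graph G with |δ(B)| = k and s ∉ B. Then for any two vertices u, v in B, there are at least ⌈k/2⌉ pairwise edge-disjoint u–v paths using only edges with both endpoints in B. -/
namespace Multigraph

variable {G : Multigraph}

lemma isWalk_append {u v w : G.V} {p q : List G.E}
    (h1 : G.IsWalk u v p) (h2 : G.IsWalk v w q) : G.IsWalk u w (p ++ q) := by
  induction h1 with
  | nil => simpa
  | cons he _ ih => exact IsWalk.cons he (ih h2)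

lemma isWalk_decomp {v : G.V} {e : G.E} :
    ∀ (p1 : List G.E) {p2 : List G.E} {u : G.V}, G.IsWalk u v (p1 ++ e :: p2) →
    ∃ a b, G.IsWalk u a p1 ∧ G.ends e = s(a, b) ∧ G.IsWalk b v p2 := by
  intro p1
  induction p1 with
  | nil =>
    intro p2 u h
    cases h with
    | cons he hw => exact ⟨_, _, IsWalk.nil _, he, hw⟩
  | cons x xs ih =>
    intro p2 u h
    cases h with
    | cons he hw =>
      obtain ⟨a, b, h1, h2, h3⟩ := ih hw
      exact ⟨a, b, IsWalk.cons he h1, h2, h3⟩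

lemma isWalk_split {u v : G.V} {e : G.E} {p : List G.E}
    (h : G.IsWalk u v p) (he : e ∈ p) :
    ∃ a b p1 p2, p = p1 ++ e :: p2 ∧ G.IsWalk u a p1 ∧ G.ends e = s(a, b) ∧
      G.IsWalk b v p2 := by
  obtain ⟨p1, p2, rfl⟩ := List.append_of_mem he
  obtain ⟨a, b, h1, h2, h3⟩ := isWalk_decomp p1 h
  exact ⟨a, b, p1, p2, rfl, h1, h2, h3⟩

lemma exists_dup {α : Type*} :
    ∀ (p : List α), ¬ p.Nodup → ∃ (e : α) (p1 p2 : List α), p = p1 ++ e :: p2 ∧ e ∈ p2 := by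
  intro p
  induction p with
  | nil => intro h; simp at h
  | cons x xs ih =>
    intro h
    by_cases hx : x ∈ xs
    · exact ⟨x, [], xs, rfl, hx⟩
    · have hxs : ¬ xs.Nodup := by
        intro hn; exact h (List.nodup_cons.mpr ⟨hx, hn⟩)
      obtain ⟨e, p1, p2, rfl, he⟩ := ih hxs
      exact ⟨e, x :: p1, p2, rfl, he⟩

lemma exists_trail :
    ∀ (n : ℕ) (p : List G.E) (u v : G.V), p.length ≤ n → G.IsWalk u v p →
      ∃ q, G.IsWalk u v q ∧ q.Nodup ∧ ∀ e ∈ q, e ∈ p := by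
  intro n
  induction n with
  | zero =>
    intro p u v hl h
    have : p = [] := List.length_eq_zero_iff.mp (Nat.le_zero.mp hl)
    subst this
    exact ⟨[], h, List.nodup_nil, by simp⟩
  | succ n ih =>
    intro p u v hl h
    by_cases hnd : p.Nodup
    · exact ⟨p, h, hnd, fun e he => he⟩
    · obtain ⟨e, p1, p2, rfl, he2⟩ := exists_dup _ hnd
      obtain ⟨a, b, h1, hab, h2⟩ := isWalk_decomp p1 h
      obtain ⟨c, d, p3, p4, hp2, h3, hcd, h4⟩ := isWalk_split h2 he2
      subst hp2
      have hlen : p1.length + p4.length + 1 ≤ n := by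
        simp only [List.length_append, List.length_cons] at hl
        omega
      rcases Sym2.eq_iff.mp (hab.symm.trans hcd) with ⟨rfl, rfl⟩ | ⟨rfl, rfl⟩
      · -- c = a, d = b : shortcut through e
        have hw : G.IsWalk u v (p1 ++ e :: p4) :=
          isWalk_append h1 (IsWalk.cons hab h4)
        obtain ⟨q, hq1, hq2, hq3⟩ := ih (p1 ++ e :: p4) u v (by
          simp only [List.length_append, List.length_cons]; omega) hw
        refine ⟨q, hq1, hq2, fun x hx => ?_⟩
        have := hq3 x hx
        simp only [List.mem_append, List.mem_cons] at this ⊢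
        tauto
      · -- c = b, d = a : drop the segment entirely
        have hw : G.IsWalk u v (p1 ++ p4) := isWalk_append h1 h4
        obtain ⟨q, hq1, hq2, hq3⟩ := ih (p1 ++ p4) u v (by
          simp only [List.length_append]; omega) hw
        refine ⟨q, hq1, hq2, fun x hx => ?_⟩
        have := hq3 x hx
        simp only [List.mem_append, List.mem_cons] at this ⊢
        tauto

lemma mem_cutSet_iff_s16 {B : Set G.V} {e : G.E} {a b : G.V} (h : G.ends e = s(a, b)) :
    e ∈ G.cutSet B ↔ ¬ (a ∈ B ↔ b ∈ B) := by
  constructor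
  · rintro ⟨x, y, hxy, hx, hy⟩
    rw [h] at hxy
    rcases Sym2.eq_iff.mp hxy with ⟨rfl, rfl⟩ | ⟨rfl, rfl⟩ <;> tauto
  · intro hne
    by_cases ha : a ∈ B
    · exact ⟨a, b, h, ha, fun hb => hne ⟨fun _ => hb, fun _ => ha⟩⟩
    · have hb : b ∈ B := by tauto
      exact ⟨b, a, by rw [h, Sym2.eq_swap], hb, ha⟩

open Classical in
lemma walk_parity {B : Set G.V} :
    ∀ {u v : G.V} {p : List G.E}, G.IsWalk u v p →
      (Even (p.countP fun e => decide (e ∈ G.cutSet B)) ↔ (u ∈ B ↔ v ∈ B)) := by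
  intro u v p h
  induction h with
  | nil w => simp
  | @cons u' v' w e p he hw ih =>
    rw [List.countP_cons]
    by_cases hc : e ∈ G.cutSet B
    · have hcross := (mem_cutSet_iff_s16 he).mp hc
      rw [if_pos (by simpa using hc), Nat.even_add_one, ih]
      tauto
    · have hcross := (mem_cutSet_iff_s16 he).not.mp hc
      push_neg at hcross
      rw [if_neg (by simpa using hc), Nat.add_zero, ih]
      tauto

lemma walk_in_B {B : Set G.V} :
    ∀ {u v : G.V} {p : List G.E}, G.IsWalk u v p → u ∈ B →
      (∀ e ∈ p, e ∉ G.cutSet B) → ∀ e ∈ p, ∀ w ∈ G.ends e, w ∈ B := by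
  intro u v p h
  induction h with
  | nil w => simp
  | @cons u' v' w e p he hw ih =>
    intro hu hcut f hf x hx
    have hv' : v' ∈ B := by
      by_contra hv'
      exact hcut e List.mem_cons_self
        ⟨u', v', he, hu, hv'⟩
    rcases List.mem_cons.mp hf with rfl | hf
    · rw [he, Sym2.mem_iff] at hx
      rcases hx with rfl | rfl
      · exact hu
      · exact hv'
    · exact ih hv' (fun g hg => hcut g (List.mem_cons_of_mem _ hg)) f hf x hx

end Multigraph

/-- if `|δ(B)| = k` with `s ∉ B`, any two vertices of `B` are
joined by `⌈k/2⌉` edge-disjoint paths lying entirely within `B`. -/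
theorem edge_disjoint_paths_within_blob (G : Multigraph) (s : G.V) (k : ℕ)
    (hcon : G.SKConnected s k)
    (B : Set G.V) (hsB : s ∉ B) (hB : (G.cutSet B).ncard = k) :
    ∀ u ∈ B, ∀ v ∈ B, G.EdgeDisjointPathsWithin B u v ((k + 1) / 2) := by
  classical
  intro u hu v hv
  have hus : u ≠ s := fun h => hsB (h ▸ hu)
  have hvs : v ≠ s := fun h => hsB (h ▸ hv)
  obtain ⟨P, hPwalk, hPdisj⟩ := hcon.2 u v hus hvs
  choose Q hQwalk hQnd hQsub using fun i =>
    Multigraph.exists_trail (P i).length (P i) u v le_rfl (hPwalk i)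
  set S : Finset (Fin k) :=
    Finset.univ.filter (fun i => ∃ e ∈ Q i, e ∈ G.cutSet B) with hS
  have hcutcard : (G.cutSet B).toFinset.card = k := by
    rw [← hB]; exact (Set.ncard_eq_toFinset_card' _).symm
  set T : Fin k → Finset G.E :=
    fun i => (Q i).toFinset.filter (· ∈ G.cutSet B) with hT
  have hTsub : ∀ i, T i ⊆ (G.cutSet B).toFinset := by
    intro i e he
    rw [hT, Finset.mem_filter] at he
    simpa using he.2
  have hTdisj : ∀ i j, i ≠ j → Disjoint (T i) (T j) := by
    intro i j hij
    rw [Finset.disjoint_left]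
    intro e hei hej
    rw [hT, Finset.mem_filter, List.mem_toFinset] at hei hej
    exact hPdisj i j hij e (hQsub i e hei.1) (hQsub j e hej.1)
  have hT2 : ∀ i ∈ S, 2 ≤ (T i).card := by
    intro i hi
    rw [hS, Finset.mem_filter] at hi
    obtain ⟨-, e, he, hec⟩ := hi
    have heven : Even ((Q i).countP fun e => decide (e ∈ G.cutSet B)) :=
      (Multigraph.walk_parity (hQwalk i)).mpr ⟨fun _ => hv, fun _ => hu⟩
    have hcard : (T i).card = (Q i).countP fun e => decide (e ∈ G.cutSet B) := by
      have hfin : (Q i).toFinset.filter (· ∈ G.cutSet B) =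
          ((Q i).filter (fun e => decide (e ∈ G.cutSet B))).toFinset := by
        ext x
        simp [List.mem_filter]
      rw [hT]
      dsimp only
      rw [hfin, List.toFinset_card_of_nodup ((hQnd i).filter _),
        List.countP_eq_length_filter]
    have hpos : 0 < (T i).card := by
      refine Finset.card_pos.mpr ⟨e, ?_⟩
      rw [hT, Finset.mem_filter, List.mem_toFinset]
      exact ⟨he, by simpa using hec⟩
    obtain ⟨m, hm⟩ := heven
    omega
  have hsum : 2 * S.card ≤ k := by
    calc 2 * S.card = ∑ _i ∈ S, 2 := by
          rw [Finset.sum_const, smul_eq_mul, mul_comm]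
      _ ≤ ∑ i ∈ S, (T i).card := Finset.sum_le_sum hT2
      _ = (S.biUnion T).card :=
          (Finset.card_biUnion (fun i _ j _ hij => hTdisj i j hij)).symm
      _ ≤ (G.cutSet B).toFinset.card :=
          Finset.card_le_card (Finset.biUnion_subset.mpr fun i _ => hTsub i)
      _ = k := hcutcard
  have hgood : (k + 1) / 2 ≤ Sᶜ.card := by
    have hc := Finset.card_compl S
    rw [Fintype.card_fin] at hc
    have h2 := Finset.card_le_univ S
    rw [Fintype.card_fin] at h2
    omega
  obtain ⟨Good, hGsub, hGcard⟩ := Finset.exists_subset_card_eq hgood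
  set f := Good.orderIsoOfFin hGcard with hf
  refine ⟨fun j => Q (f j), ?_, ?_⟩
  · intro j
    have hmem : ((f j : Good) : Fin k) ∉ S := by
      have := hGsub (f j).2
      simpa using this
    have hnc : ∀ e ∈ Q (f j), e ∉ G.cutSet B := by
      intro e he hec
      refine hmem ?_
      rw [hS, Finset.mem_filter]
      exact ⟨Finset.mem_univ _, e, he, hec⟩
    exact ⟨hQwalk _, Multigraph.walk_in_B (hQwalk _) hu hnc⟩
  · intro i j hij e hei hej
    have hne : ((f i : Good) : Fin k) ≠ ((f j : Good) : Fin k) := by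
      intro h
      exact hij (f.injective (Subtype.ext h))
    exact hPdisj _ _ hne e (hQsub _ e hei) (hQsub _ e hej)
end

section
/- Let G be an (s,k)-edge-connected graph with k ≥ 2 and deg(s) = 3 such that no pair of edges incident with s is k-liftable. Then s has three distinct neighbours s₁, s₂, s₃ (in particular, no two edges at s are parallel). -/
namespace Multigraph

variable (G : Multigraph)

lemma otherEnd_spec {s : G.V} {h : G.E} (hm : s ∈ G.ends h) :
    G.ends h = s(s, G.otherEnd s h) := by
  rw [otherEnd, dif_pos hm]
  exact (Sym2.other_spec' hm).symm

lemma otherEnd_eq {s v : G.V} {h : G.E} (hends : G.ends h = s(s, v)) :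
    G.otherEnd s h = v := by
  have hm : s ∈ G.ends h := by rw [hends]; exact Sym2.mem_mk_left s v
  have hsp := G.otherEnd_spec hm
  rw [hends] at hsp
  exact (Sym2.congr_right.mp hsp.symm)

/-- Key surgery lemma: walks between non-`s` vertices can be rerouted into the
lift. -/
lemma surgery {s : G.V} {e g d : G.E} (he : s ∈ G.ends e) (hg : s ∈ G.ends g)
    (hclass : ∀ h, s ∈ G.ends h →
      G.otherEnd s h = G.otherEnd s e ∨ G.otherEnd s h = G.otherEnd s g)
    (huniq : ∀ a b, s ∈ G.ends a → s ∈ G.ends b →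
      G.otherEnd s a ≠ G.otherEnd s b → a = d ∨ b = d)
    {v : G.V} (hv : v ≠ s) :
    ∀ n (p : List G.E), p.length ≤ n → ∀ u, G.IsWalk u v p → u ≠ s →
      ∃ q, (G.lift s e g).IsWalk u v q ∧
        ∀ x ∈ q, (∃ a : {x : G.E // x ≠ e ∧ x ≠ g}, x = Sum.inl a ∧ a.1 ∈ p) ∨
          ((∃ h' : PLift (G.otherEnd s e ≠ G.otherEnd s g), x = Sum.inr h') ∧ d ∈ p) := by
  intro n
  induction n with
  | zero =>
    intro p hlen u hw hu
    have hp : p = [] := List.eq_nil_of_length_eq_zero (by omega)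
    subst hp
    cases hw
    exact ⟨[], IsWalk.nil _, by simp⟩
  | succ n ih =>
    intro p hlen u hw hu
    cases hw with
    | nil => exact ⟨[], IsWalk.nil _, by simp⟩
    | @cons _ m _ a p' ha hrest =>
      by_cases hsa : s ∈ G.ends a
      · have hm : m = s := by
          rw [ha, Sym2.mem_iff] at hsa
          rcases hsa with h | h
          · exact absurd h.symm hu
          · exact h.symm
        rw [hm] at ha hrest
        cases hrest with
        | nil => exact absurd rfl hv
        | @cons _ m' _ b p'' hb hrest2 =>
          have hsa' : s ∈ G.ends a := hsa
          have hm's : m' ≠ s := by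
            intro hc
            exact (G.loopless b) (by rw [hb, hc]; simp)
          have hsb : s ∈ G.ends b := by rw [hb]; simp
          have hoa : G.otherEnd s a = u := G.otherEnd_eq (by rw [ha, Sym2.eq_swap])
          have hob : G.otherEnd s b = m' := G.otherEnd_eq hb
          have hlen'' : p''.length ≤ n := by
            simp only [List.length_cons] at hlen; omega
          by_cases hum : u = m'
          · obtain ⟨q, hq, hsub⟩ := ih p'' hlen'' m' hrest2 hm's
            subst hum
            refine ⟨q, hq, fun x hx => ?_⟩
            rcases hsub x hx with ⟨a', hxa, hmem⟩ | ⟨hx', hmem⟩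
            · exact Or.inl ⟨a', hxa, by simp [hmem]⟩
            · exact Or.inr ⟨hx', by simp [hmem]⟩
          · have hda : a = d ∨ b = d := huniq a b hsa' hsb (by rw [hoa, hob]; exact hum)
            have hd : d ∈ a :: b :: p'' := by
              rcases hda with h | h
              · rw [← h]; simp
              · rw [← h]; simp
            obtain ⟨q, hq, hsub⟩ := ih p'' hlen'' m' hrest2 hm's
            have hmemlift : ∀ x ∈ q,
                (∃ a' : {x : G.E // x ≠ e ∧ x ≠ g}, x = Sum.inl a' ∧ a'.1 ∈ a :: b :: p'') ∨
                ((∃ h' : PLift (G.otherEnd s e ≠ G.otherEnd s g), x = Sum.inr h') ∧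
                  d ∈ a :: b :: p'') := by
              intro x hx
              rcases hsub x hx with ⟨a', hxa, hmem⟩ | ⟨hx', hmem⟩
              · exact Or.inl ⟨a', hxa, by simp [hmem]⟩
              · exact Or.inr ⟨hx', hd⟩
            rcases hclass a hsa' with hA | hA <;> rcases hclass b hsb with hB | hB
            · exact absurd (by rw [← hoa, ← hob, hA, hB]) hum
            · have hEu : G.otherEnd s e = u := by rw [← hA, hoa]
              have hGm : G.otherEnd s g = m' := by rw [← hB, hob]
              have hAB : G.otherEnd s e ≠ G.otherEnd s g := by
                rw [hEu, hGm]; exact hum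
              refine ⟨Sum.inr ⟨hAB⟩ :: q, IsWalk.cons ?_ hq, ?_⟩
              · show s(G.otherEnd s e, G.otherEnd s g) = s(u, m')
                rw [hEu, hGm]
              · intro x hx
                rcases List.mem_cons.mp hx with rfl | hx'
                · exact Or.inr ⟨⟨_, rfl⟩, hd⟩
                · exact hmemlift x hx'
            · have hEu : G.otherEnd s g = u := by rw [← hA, hoa]
              have hGm : G.otherEnd s e = m' := by rw [← hB, hob]
              have hAB : G.otherEnd s e ≠ G.otherEnd s g := by
                rw [hEu, hGm]; exact fun hc => hum hc.symm
              refine ⟨Sum.inr ⟨hAB⟩ :: q, IsWalk.cons ?_ hq, ?_⟩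
              · show s(G.otherEnd s e, G.otherEnd s g) = s(u, m')
                rw [hEu, hGm, Sym2.eq_swap]
              · intro x hx
                rcases List.mem_cons.mp hx with rfl | hx'
                · exact Or.inr ⟨⟨_, rfl⟩, hd⟩
                · exact hmemlift x hx'
            · exact absurd (by rw [← hoa, ← hob, hA, hB]) hum
      · have hm : m ≠ s := fun hc => hsa (by rw [ha, hc]; simp)
        have hlen' : p'.length ≤ n := by
          simp only [List.length_cons] at hlen; omega
        obtain ⟨q, hq, hsub⟩ := ih p' hlen' m hrest hm
        have hane : a ≠ e := fun hc => hsa (by rw [hc]; exact he)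
        have hang : a ≠ g := fun hc => hsa (by rw [hc]; exact hg)
        refine ⟨Sum.inl ⟨a, hane, hang⟩ :: q, IsWalk.cons ha hq, ?_⟩
        intro x hx
        rcases List.mem_cons.mp hx with rfl | hx'
        · exact Or.inl ⟨⟨a, hane, hang⟩, rfl, by simp⟩
        · rcases hsub x hx' with ⟨a', hxa, hmem⟩ | ⟨hx'', hmem⟩
          · exact Or.inl ⟨a', hxa, by simp [hmem]⟩
          · exact Or.inr ⟨hx'', by simp [hmem]⟩

lemma lift_skconnected {s : G.V} {k : ℕ} (hcon : G.SKConnected s k)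
    {e g d : G.E} (he : s ∈ G.ends e) (hg : s ∈ G.ends g)
    (hclass : ∀ h, s ∈ G.ends h →
      G.otherEnd s h = G.otherEnd s e ∨ G.otherEnd s h = G.otherEnd s g)
    (huniq : ∀ a b, s ∈ G.ends a → s ∈ G.ends b →
      G.otherEnd s a ≠ G.otherEnd s b → a = d ∨ b = d) :
    (G.lift s e g).SKConnected s k := by
  constructor
  · have hcard : Fintype.card (G.lift s e g).V = Fintype.card G.V :=
      Fintype.card_congr (Equiv.refl _)
    rw [hcard]; exact hcon.1
  · intro u v hu hv
    obtain ⟨P, hP, hdisj⟩ := hcon.2 u v hu hv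
    have hsurg := fun i =>
      G.surgery he hg hclass huniq hv (P i).length (P i) le_rfl u (hP i) hu
    choose Q hQ hQsub using hsurg
    refine ⟨Q, fun i => hQ i, fun i j hij x hxi hxj => ?_⟩
    rcases hQsub i x hxi with ⟨a, rfl, hmem⟩ | ⟨⟨h', rfl⟩, hmem⟩
    · rcases hQsub j _ hxj with ⟨a', heq', hmem'⟩ | ⟨⟨h'', heq'⟩, _⟩
      · replace heq' := Sum.inl.inj heq'
        exact hdisj i j hij a.1 hmem (heq' ▸ hmem')
      · exact Sum.inl_ne_inr heq'
    · rcases hQsub j _ hxj with ⟨a', heq', _⟩ | ⟨_, hmem'⟩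
      · exact Sum.inr_ne_inl heq'
      · exact hdisj i j hij d hmem hmem'

end Multigraph

/-- if `deg(s) = 3` and no pair of edges at `s` is liftable,
then `s` has three distinct neighbours and no two edges at `s` are parallel. -/
theorem three_distinct_neighbours (G : Multigraph) (s : G.V) (k : ℕ)
    (hk : 2 ≤ k) (hcon : G.SKConnected s k) (hdeg : G.deg s = 3)
    (hnl : ∀ e f : G.E, s ∈ G.ends e → s ∈ G.ends f → e ≠ f →
      ¬ G.IsLiftable s k e f) :
    (∃ s₁ s₂ s₃ : G.V, s₁ ≠ s₂ ∧ s₁ ≠ s₃ ∧ s₂ ≠ s₃ ∧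
      G.neighborSet s = {s₁, s₂, s₃}) ∧
    ∀ e f : G.E, s ∈ G.ends e → s ∈ G.ends f → e ≠ f →
      G.otherEnd s e ≠ G.otherEnd s f := by
  obtain ⟨a, b, c, hab, hac, hbc, hS⟩ := Set.ncard_eq_three.mp hdeg
  have hmemS : ∀ h : G.E, s ∈ G.ends h → h = a ∨ h = b ∨ h = c := by
    intro h hh
    have : h ∈ G.incEdges s := hh
    rw [hS] at this
    simpa using this
  have hainc : s ∈ G.ends a := by
    have : a ∈ G.incEdges s := by rw [hS]; simp
    exact this
  have hbinc : s ∈ G.ends b := by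
    have : b ∈ G.incEdges s := by rw [hS]; simp
    exact this
  have hcinc : s ∈ G.ends c := by
    have : c ∈ G.incEdges s := by rw [hS]; simp
    exact this
  have key : ∀ e f : G.E, s ∈ G.ends e → s ∈ G.ends f → e ≠ f →
      G.otherEnd s e ≠ G.otherEnd s f := by
    intro e f hse hsf hef heq
    obtain ⟨g0, hg0e, hg0f, hg0inc, hclassify⟩ :
        ∃ g0, g0 ≠ e ∧ g0 ≠ f ∧ s ∈ G.ends g0 ∧
          ∀ h, s ∈ G.ends h → h = e ∨ h = f ∨ h = g0 := by
      rcases hmemS e hse with rfl | rfl | rfl <;> rcases hmemS f hsf with rfl | rfl | rfl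
      · exact absurd rfl hef
      · exact ⟨c, Ne.symm hac, Ne.symm hbc, hcinc, hmemS⟩
      · exact ⟨b, Ne.symm hab, hbc, hbinc, fun h hh => by
          rcases hmemS h hh with h1 | h1 | h1 <;> tauto⟩
      · exact ⟨c, Ne.symm hbc, Ne.symm hac, hcinc, fun h hh => by
          rcases hmemS h hh with h1 | h1 | h1 <;> tauto⟩
      · exact absurd rfl hef
      · exact ⟨a, hab, hac, hainc, fun h hh => by
          rcases hmemS h hh with h1 | h1 | h1 <;> tauto⟩
      · exact ⟨b, hbc, Ne.symm hab, hbinc, fun h hh => by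
          rcases hmemS h hh with h1 | h1 | h1 <;> tauto⟩
      · exact ⟨a, hac, hab, hainc, fun h hh => by
          rcases hmemS h hh with h1 | h1 | h1 <;> tauto⟩
      · exact absurd rfl hef
    by_cases hpar : G.otherEnd s g0 = G.otherEnd s e
    · -- all three edges at s are parallel
      have hall : ∀ h, s ∈ G.ends h → G.otherEnd s h = G.otherEnd s e := by
        intro h hh
        rcases hclassify h hh with rfl | rfl | rfl
        · rfl
        · exact heq.symm
        · exact hpar
      have huniq : ∀ a' b', s ∈ G.ends a' → s ∈ G.ends b' →
          G.otherEnd s a' ≠ G.otherEnd s b' → a' = e ∨ b' = e := by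
        intro a' b' ha' hb' hne
        exact absurd ((hall a' ha').trans (hall b' hb').symm) hne
      refine hnl e f hse hsf hef ⟨?_, ?_⟩
      · exact G.lift_skconnected hcon hse hsf
          (fun h hh => Or.inl (hall h hh)) huniq
      · exact G.lift_skconnected hcon hsf hse
          (fun h hh => Or.inr (hall h hh)) huniq
    · -- g0 has a different other end
      have hall : ∀ h, s ∈ G.ends h → h ≠ g0 → G.otherEnd s h = G.otherEnd s e := by
        intro h hh hne
        rcases hclassify h hh with rfl | rfl | rfl
        · rfl
        · exact heq.symm
        · exact absurd rfl hne
      have huniq : ∀ a' b', s ∈ G.ends a' → s ∈ G.ends b' →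
          G.otherEnd s a' ≠ G.otherEnd s b' → a' = g0 ∨ b' = g0 := by
        intro a' b' ha' hb' hne
        by_cases h1 : a' = g0
        · exact Or.inl h1
        by_cases h2 : b' = g0
        · exact Or.inr h2
        exact absurd ((hall a' ha' h1).trans (hall b' hb' h2).symm) hne
      have hclass2 : ∀ h, s ∈ G.ends h →
          G.otherEnd s h = G.otherEnd s e ∨ G.otherEnd s h = G.otherEnd s g0 := by
        intro h hh
        by_cases h1 : h = g0
        · exact Or.inr (by rw [h1])
        · exact Or.inl (hall h hh h1)
      refine hnl e g0 hse hg0inc (Ne.symm hg0e) ⟨?_, ?_⟩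
      · exact G.lift_skconnected hcon hse hg0inc hclass2 huniq
      · exact G.lift_skconnected hcon hg0inc hse
          (fun h hh => (hclass2 h hh).symm) huniq
  refine ⟨⟨G.otherEnd s a, G.otherEnd s b, G.otherEnd s c,
      key a b hainc hbinc hab, key a c hainc hcinc hac, key b c hbinc hcinc hbc, ?_⟩, key⟩
  ext v
  simp only [Multigraph.neighborSet, Set.mem_setOf_eq, Set.mem_insert_iff,
    Set.mem_singleton_iff]
  constructor
  · rintro ⟨h, hh⟩
    have hinc : s ∈ G.ends h := by rw [hh]; simp
    have hoe := G.otherEnd_eq hh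
    rcases hmemS h hinc with rfl | rfl | rfl
    · exact Or.inl hoe.symm
    · exact Or.inr (Or.inl hoe.symm)
    · exact Or.inr (Or.inr hoe.symm)
  · rintro (rfl | rfl | rfl)
    · exact ⟨a, G.otherEnd_spec hainc⟩
    · exact ⟨b, G.otherEnd_spec hbinc⟩
    · exact ⟨c, G.otherEnd_spec hcinc⟩
end
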